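/- arXiv:1008.2901 — 8 statements merged into one kernel-verified Lean document; each statement's English description precedes it below -/
import Mathlib

section
/- Let f ∈ F[x_1,...,x_n] and let r be the unique polynomial with degree strictly less than d_i in each variable x_i such that f − r lies in the ideal generated by g_1(x_1), ..., g_n(x_n). Then r = 0 if and only if f ∈ I. -/
/-!
Each `g_i` vanishes to order `m_i(s_i)` in `x_i` at every grid point `s`, so it lies in every
`I(s, m(s))`; as `f - r` is in the span of the `g_i`, `f ∈ I` iff `r ∈ I`. It remains to see that
a polynomial `r ∈ I` with `deg_{x_i} r < d_i` is zero, by induction on `n`. View `r` as a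
polynomial in `x_0` over `F[x_1, …, x_{n-1}]` and expand it at `x_0 = t ∈ S_0`: its coefficients of
order `j < m_0(t)` satisfy the same hypotheses in `n - 1` variables, hence vanish. So the pairwise
coprime factors `(x_0 - t)^{m_0(t)}` all divide `r`, and their product has degree
`d_0 > deg_{x_0} r`.
-/

open MvPolynomial

/-- The Taylor coefficient `f_u(s)`: the coefficient of `x^u` in `f(x + s)`. -/
noncomputable def taylorCoeff {F : Type*} [Field F] {n : ℕ}
    (f : MvPolynomial (Fin n) F) (s : Fin n → F) (u : Fin n →₀ ℕ) : F :=
  coeff u (aeval (fun i => X i + C (s i)) f)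

/-- Membership in the ideal `I(s, w)`: all Taylor coefficients `f_u(s)` with
`u < w` (componentwise) vanish. -/
def memPointIdeal {F : Type*} [Field F] {n : ℕ}
    (f : MvPolynomial (Fin n) F) (s : Fin n → F) (w : Fin n → ℕ) : Prop :=
  ∀ u : Fin n →₀ ℕ, (∀ i, u i < w i) → taylorCoeff f s u = 0

/-- The polynomial `g_i(x_i) = ∏_{s ∈ S_i} (x_i - s)^{m_i(s)}`. -/
noncomputable def gPoly {F : Type*} [Field F] {n : ℕ}
    (S : Fin n → Finset F) (m : Fin n → F → ℕ) (i : Fin n) : MvPolynomial (Fin n) F :=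
  ∏ s ∈ S i, (X i - C s) ^ m i s

/-- The size `d_i = Σ_{s ∈ S_i} m_i(s)` of the multiset `(S_i, m_i)`. -/
def dSize {F : Type*} {n : ℕ} (S : Fin n → Finset F) (m : Fin n → F → ℕ) (i : Fin n) : ℕ :=
  ∑ s ∈ S i, m i s

namespace Polynomial

variable {A : Type*} [CommRing A]

theorem X_sub_C_pow_dvd_iff_X_pow_dvd_taylor {a : A} {k : ℕ} {q : A[X]} :
    (X - C a) ^ k ∣ q ↔ X ^ k ∣ taylor a q := by
  rw [← map_dvd_iff (taylorEquiv a)]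
  change taylor a ((X - C a) ^ k) ∣ taylor a q ↔ _
  rw [taylor_pow, map_sub, taylor_X, taylor_C, add_sub_cancel_right]

theorem eq_zero_of_X_sub_C_pow_dvd [IsDomain A] {ι : Type*} (T : Finset ι) (a : ι → A)
    (ha : (T : Set ι).Pairwise fun i j => IsUnit (a i - a j)) (m : ι → ℕ) {q : A[X]}
    (hq : q.natDegree < ∑ i ∈ T, m i) (hdvd : ∀ i ∈ T, (X - C (a i)) ^ m i ∣ q) : q = 0 := by
  by_contra hq0
  have hprod : (∏ i ∈ T, (X - C (a i)) ^ m i) ∣ q :=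
    Finset.prod_dvd_of_coprime
      (fun i hi j hj hij => (isCoprime_X_sub_C_of_isUnit_sub (ha hi hj hij)).pow) hdvd
  have hmonic : ∀ i ∈ T, ((X - C (a i)) ^ m i).Monic := fun i _ => (monic_X_sub_C _).pow _
  have hdeg := natDegree_le_of_dvd hprod hq0
  rw [natDegree_prod_of_monic _ _ hmonic] at hdeg
  simp only [natDegree_pow, natDegree_X_sub_C, mul_one] at hdeg
  omega

end Polynomial

namespace MvPolynomial

variable {σ R : Type*} [CommSemiring R]

theorem degreeOf_eval_C_le (i : σ) (p : Polynomial (MvPolynomial σ R)) (a : R)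
    {D : ℕ} (h : ∀ k, degreeOf i (p.coeff k) ≤ D) : degreeOf i (p.eval (C a)) ≤ D := by
  rw [Polynomial.eval_eq_sum_range]
  refine (degreeOf_sum_le _ _ _).trans (Finset.sup_le fun k _ => ?_)
  rw [← map_pow]
  exact (degreeOf_mul_C_le _ _ _).trans (h k)

theorem degreeOf_coeff_taylor_C_le (i : σ) (p : Polynomial (MvPolynomial σ R))
    (a : R) (j : ℕ) {D : ℕ} (h : ∀ k, degreeOf i (p.coeff k) ≤ D) :
    degreeOf i ((Polynomial.taylor (C a) p).coeff j) ≤ D := by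
  rw [Polynomial.taylor_coeff]
  refine degreeOf_eval_C_le i _ a fun k => ?_
  rw [Polynomial.hasseDeriv_coeff, ← map_natCast C]
  exact (degreeOf_C_mul_le _ _ _).trans (h _)

end MvPolynomial

section PointIdeal

variable {F : Type*} [Field F] {n : ℕ}

/-- The ideal `I(s, w)`. -/
def pointIdeal (s : Fin n → F) (w : Fin n → ℕ) : Ideal (MvPolynomial (Fin n) F) where
  carrier := {f | memPointIdeal f s w}
  zero_mem' u _ := by simp [taylorCoeff]
  add_mem' {f g} hf hg u hu := by
    change coeff u (aeval _ (f + g)) = 0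
    rw [map_add, coeff_add, ← taylorCoeff, ← taylorCoeff, hf u hu, hg u hu, add_zero]
  smul_mem' p f hf u hu := by
    change coeff u (aeval _ (p * f)) = 0
    rw [map_mul, coeff_mul]
    refine Finset.sum_eq_zero fun e he => mul_eq_zero_of_right _ (hf e.2 fun i => ?_)
    rw [Finset.HasAntidiagonal.mem_antidiagonal] at he
    exact lt_of_le_of_lt (he ▸ le_add_self) (hu i)

theorem X_sub_C_pow_mem_pointIdeal {s : Fin n → F} {w : Fin n → ℕ} {i : Fin n} {k : ℕ}
    (hk : w i ≤ k) : (X i - C (s i)) ^ k ∈ pointIdeal s w := by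
  intro u hu
  have hshift : aeval (fun i => X i + C (s i)) ((X i - C (s i)) ^ k : MvPolynomial (Fin n) F)
      = X i ^ k := by
    rw [map_pow, map_sub, aeval_X, aeval_C, algebraMap_eq, add_sub_cancel_right]
  have hu' : Finsupp.single i k ≠ u := fun h => by
    have := hu i
    rw [← h, Finsupp.single_eq_same] at this
    omega
  rw [taylorCoeff, hshift, coeff_X_pow, if_neg hu']

theorem gPoly_mem_pointIdeal (S : Fin n → Finset F) (m : Fin n → F → ℕ) (i : Fin n)
    {s : Fin n → F} (hs : ∀ j, s j ∈ S j) : gPoly S m i ∈ pointIdeal s fun j => m j (s j) := by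
  classical
  rw [gPoly, ← Finset.prod_erase_mul _ _ (hs i)]
  exact Ideal.mul_mem_left _ _ (X_sub_C_pow_mem_pointIdeal le_rfl)

theorem span_gPoly_le_pointIdeal (S : Fin n → Finset F) (m : Fin n → F → ℕ)
    {s : Fin n → F} (hs : ∀ j, s j ∈ S j) :
    Ideal.span (Set.range (gPoly S m)) ≤ pointIdeal s fun j => m j (s j) :=
  Ideal.span_le.2 <| Set.range_subset_iff.2 fun i => gPoly_mem_pointIdeal S m i hs

end PointIdeal

section Grid

variable {F : Type*} [Field F]

theorem finSuccEquiv_aeval_X_add_C {n : ℕ} (r : MvPolynomial (Fin (n + 1)) F) (t : F)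
    (s : Fin n → F) :
    finSuccEquiv F n (aeval (fun i => X i + C ((Fin.cons t s : Fin (n + 1) → F) i)) r) =
      Polynomial.mapAlgHom (aeval fun i => X i + C (s i))
        (Polynomial.taylor (C t) (finSuccEquiv F n r)) := by
  have hcomp : (finSuccEquiv F n).toAlgHom.comp
        (aeval fun i => X i + C ((Fin.cons t s : Fin (n + 1) → F) i)) =
      (Polynomial.mapAlgHom (aeval fun i => X i + C (s i))).comp
        (((Polynomial.aeval (Polynomial.X + Polynomial.C (C t))).restrictScalars F).comp
          (finSuccEquiv F n).toAlgHom) := by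
    refine MvPolynomial.algHom_ext fun i => Fin.cases ?_ (fun k => ?_) i <;>
      simp [finSuccEquiv_apply, Polynomial.mapAlgHom, algebraMap_eq]
  rw [Polynomial.taylor_apply, Polynomial.comp, ← Polynomial.algebraMap_eq, ← Polynomial.aeval_def]
  exact DFunLike.congr_fun hcomp r

theorem taylorCoeff_cons {n : ℕ} (r : MvPolynomial (Fin (n + 1)) F) (t : F) (s : Fin n → F)
    (j : ℕ) (u : Fin n →₀ ℕ) :
    taylorCoeff r (Fin.cons t s) (Finsupp.cons j u) =
      taylorCoeff ((Polynomial.taylor (C t) (finSuccEquiv F n r)).coeff j) s u := by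
  rw [taylorCoeff, ← finSuccEquiv_coeff_coeff, finSuccEquiv_aeval_X_add_C,
    Polynomial.coe_mapAlgHom, Polynomial.coeff_map]
  rfl

theorem eq_zero_of_forall_mem_pointIdeal {n : ℕ} (S : Fin n → Finset F) (m : Fin n → F → ℕ)
    (r : MvPolynomial (Fin n) F) (hr : ∀ i, r.degreeOf i < dSize S m i)
    (hvan : ∀ s : Fin n → F, (∀ i, s i ∈ S i) → r ∈ pointIdeal s fun i => m i (s i)) :
    r = 0 := by
  induction n with
  | zero =>
    have h0 := hvan Fin.elim0 (fun i => i.elim0) 0 fun i => i.elim0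
    rw [taylorCoeff, eq_C_of_isEmpty r, aeval_C, algebraMap_eq, coeff_zero_C] at h0
    rw [eq_C_of_isEmpty r, h0, map_zero]
  | succ n ih =>
    set q := finSuccEquiv F n r
    have hcoeff : ∀ t ∈ S 0, ∀ j < m 0 t, (Polynomial.taylor (C t) q).coeff j = 0 := by
      intro t ht j hj
      refine ih (fun i => S i.succ) (fun i => m i.succ) _ (fun i => ?_) fun s hs u hu => ?_
      · exact (degreeOf_coeff_taylor_C_le i q t j (degreeOf_coeff_finSuccEquiv r i)).trans_lt
          (hr i.succ)
      · rw [← taylorCoeff_cons]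
        exact hvan (Fin.cons t s) (Fin.cases ht hs) _ (Fin.cases hj hu)
    have hunit : (S 0 : Set F).Pairwise
        fun t t' => IsUnit (C t - C t' : MvPolynomial (Fin n) F) := fun t _ t' _ hne => by
      show IsUnit (C t - C t')
      rw [← map_sub]
      exact (sub_ne_zero.2 hne).isUnit.map C
    have hq : q = 0 := Polynomial.eq_zero_of_X_sub_C_pow_dvd (S 0) C hunit (m 0)
      (by rw [natDegree_finSuccEquiv]; exact hr 0) fun t ht =>
        Polynomial.X_sub_C_pow_dvd_iff_X_pow_dvd_taylor.2 <|
          Polynomial.X_pow_dvd_iff.2 (hcoeff t ht)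
    exact (finSuccEquiv F n).injective (hq.trans (map_zero _).symm)

end Grid

theorem stmt_3_general {F : Type*} [Field F] {n : ℕ}
    (S : Fin n → Finset F)
    (m : Fin n → F → ℕ)
    (f r : MvPolynomial (Fin n) F)
    (hr : ∀ i, r.degreeOf i < dSize S m i)
    (hfr : f - r ∈ Ideal.span (Set.range (gPoly S m))) :
    r = 0 ↔
      ∀ s : Fin n → F, (∀ i, s i ∈ S i) →
        memPointIdeal f s fun i => m i (s i) := by
  constructor
  · rintro rfl s hs
    rw [sub_zero] at hfr
    exact span_gPoly_le_pointIdeal S m hs hfr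
  · intro hf
    refine eq_zero_of_forall_mem_pointIdeal S m r hr fun s hs => ?_
    rw [← sub_sub_cancel f r]
    exact Ideal.sub_mem _ (hf s hs) (span_gPoly_le_pointIdeal S m hs hfr)

/-- If `r` is the (unique) remainder of `f` modulo `g_1, …, g_n`, with degree in each
variable `x_i` less than `d_i`, then `r = 0` if and only if `f ∈ I = ⋂_{s ∈ S} I(s, m(s))`. -/
theorem stmt_3 {F : Type*} [Field F] {n : ℕ} (hn : 1 ≤ n)
    (S : Fin n → Finset F) (hS : ∀ i, (S i).Nonempty)
    (m : Fin n → F → ℕ) (hm : ∀ i, ∀ s ∈ S i, 1 ≤ m i s)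
    (f r : MvPolynomial (Fin n) F)
    (hr : ∀ i, r.degreeOf i < dSize S m i)
    (hfr : f - r ∈ Ideal.span (Set.range (gPoly S m))) :
    r = 0 ↔
      ∀ s : Fin n → F, (∀ i, s i ∈ S i) →
        memPointIdeal f s fun i => m i (s i) :=
  stmt_3_general S m f r hr hfr
end

section
/- Let t = (d_1 − 1, ..., d_n − 1). There exist constants α^{(s)}_u ∈ F, indexed by s ∈ S and exponent vectors u with u_i < m_i(s_i) for all i, independent of f, such that f_t = Σ_{s ∈ S} Σ_{u < m(s)} α^{(s)}_u f_u(s) holds for every polynomial f ∈ F[x_1,...,x_n] with deg f ≤ t_1 + ⋯ + t_n. (Here f_t denotes the coefficient of the monomial x_1^{t_1}⋯x_n^{t_n} in f.) -/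
open MvPolynomial

section OneDimensional
open Polynomial


lemma dvd_of_taylor_coeff {F : Type*} [Field F] (p : F[X]) (s : F) (M : ℕ)
    (h : ∀ u < M, (taylor s p).coeff u = 0) : (Polynomial.X - Polynomial.C s) ^ M ∣ p := by
  obtain ⟨q, hq⟩ := (X_pow_dvd_iff).2 h
  have hp : p = taylor (-s) (taylor s p) := by
    rw [taylor_taylor, neg_add_cancel, taylor_zero]
  rw [hp, hq]
  have : taylor (-s) (Polynomial.X ^ M * q) = (Polynomial.X - Polynomial.C s) ^ M * taylor (-s) q := by
    have h1 := map_mul (taylorAlgHom (R := F) (-s)) (Polynomial.X ^ M) q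
    have h2 := map_pow (taylorAlgHom (R := F) (-s)) Polynomial.X M
    simp only [taylorAlgHom_apply] at h1 h2
    rw [h1, h2, taylor_X]
    rw [map_neg, sub_eq_add_neg]
  rw [this]
  exact Dvd.intro _ rfl

lemma poly_eq_zero_of_taylor {F : Type*} [Field F] (Sf : Finset F) (mf : F → ℕ)
    (p : F[X]) (hdeg : p.natDegree < ∑ s ∈ Sf, mf s)
    (h : ∀ s ∈ Sf, ∀ u < mf s, (taylor s p).coeff u = 0) : p = 0 := by
  by_contra hp
  have hdvd : (∏ s ∈ Sf, (Polynomial.X - Polynomial.C s) ^ mf s) ∣ p := by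
    refine Finset.prod_dvd_of_coprime ?_ fun s hs => dvd_of_taylor_coeff p s (mf s) (h s hs)
    intro a ha b hb hab
    exact (isCoprime_X_sub_C_of_isUnit_sub (sub_ne_zero_of_ne hab).isUnit).pow
  have hle := Polynomial.natDegree_le_of_dvd hdvd hp
  rw [Polynomial.natDegree_prod] at hle
  · simp only [natDegree_pow, natDegree_X_sub_C, mul_one] at hle
    omega
  · intro s _
    exact pow_ne_zero _ (X_sub_C_ne_zero s)

lemma oneDim {F : Type*} [Field F] (Sf : Finset F) (hSf : Sf.Nonempty)
    (mf : F → ℕ) (hmf : ∀ s ∈ Sf, 1 ≤ mf s) :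
    ∃ β : F → ℕ → F, ∀ k ≤ (∑ s ∈ Sf, mf s) - 1,
      ∑ s ∈ Sf, ∑ u ∈ Finset.range (mf s), β s u * ((k.choose u : F) * s ^ (k - u)) =
        if k = (∑ s ∈ Sf, mf s) - 1 then 1 else 0 := by
  set d := ∑ s ∈ Sf, mf s with hd_def
  have hd : 1 ≤ d := by
    obtain ⟨s, hs⟩ := hSf
    calc 1 ≤ mf s := hmf s hs
    _ ≤ d := Finset.single_le_sum (fun t _ => Nat.zero_le _) hs
  -- index type
  let ι := (s : {x // x ∈ Sf}) × Fin (mf s.1)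
  -- the functionals
  let φ : ι → ((Fin d → F) →ₗ[F] F) := fun i =>
    ∑ k : Fin d, ((((k : ℕ).choose (i.2 : ℕ) : F)) * (i.1 : F) ^ ((k : ℕ) - (i.2 : ℕ))) •
      (LinearMap.proj k : (Fin d → F) →ₗ[F] F)
  let K : (Fin d → F) →ₗ[F] F := LinearMap.proj (⟨d - 1, by omega⟩ : Fin d)
  have hker : ⨅ i, LinearMap.ker (φ i) ≤ LinearMap.ker K := by
    intro c hc
    simp only [Submodule.mem_iInf, LinearMap.mem_ker] at hc
    -- build polynomial
    set p : F[X] := ∑ k : Fin d, Polynomial.monomial (k : ℕ) (c k) with hp_def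
    have hφval : ∀ (s : F) (u : ℕ), (taylor s p).coeff u =
        ∑ k : Fin d, (((k : ℕ).choose u : F) * s ^ ((k : ℕ) - u)) * c k := by
      intro s u
      rw [taylor_coeff, hp_def, map_sum, Polynomial.eval_finset_sum]
      refine Finset.sum_congr rfl fun k _ => ?_
      rw [hasseDeriv_monomial, Polynomial.eval_monomial]
      ring
    have hp0 : p = 0 := by
      refine poly_eq_zero_of_taylor Sf mf p ?_ ?_
      swap
      · intro s hs u hu
        rw [hφval]
        have := hc ⟨⟨s, hs⟩, ⟨u, hu⟩⟩
        simpa only [φ, LinearMap.sum_apply, LinearMap.smul_apply, LinearMap.proj_apply,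
          smul_eq_mul] using this
      · calc p.natDegree ≤ d - 1 := by
              apply Polynomial.natDegree_sum_le_of_forall_le
              intro k _
              exact (Polynomial.natDegree_monomial_le _).trans (by omega)
        _ < d := by omega
    have hcoeff : p.coeff (d - 1) = c ⟨d - 1, by omega⟩ := by
      rw [hp_def, Polynomial.finset_sum_coeff]
      rw [Finset.sum_eq_single (⟨d - 1, by omega⟩ : Fin d)]
      · simp [Polynomial.coeff_monomial]
      · intro k _ hk
        rw [Polynomial.coeff_monomial, if_neg]
        intro h
        apply hk
        exact Fin.ext h
      · simp
    simp only [LinearMap.mem_ker, K, LinearMap.proj_apply]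
    rw [← hcoeff, hp0, Polynomial.coeff_zero]
  have hspan : K ∈ Submodule.span F (Set.range φ) := mem_span_of_iInf_ker_le_ker hker
  obtain ⟨γ, hγ⟩ := (Submodule.mem_span_range_iff_exists_fun F).1 hspan
  classical
  refine ⟨fun s u => if h : s ∈ Sf then (if h2 : u < mf s then γ ⟨⟨s, h⟩, ⟨u, h2⟩⟩ else 0) else 0,
    fun k hk => ?_⟩
  -- evaluate at basis vector
  have hkd : k < d := by omega
  have happ := LinearMap.congr_fun hγ (Pi.single (⟨k, hkd⟩ : Fin d) 1)
  have hKapp : K (Pi.single (⟨k, hkd⟩ : Fin d) 1) = if k = d - 1 then 1 else 0 := by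
    simp only [K, LinearMap.proj_apply]
    rcases eq_or_ne k (d - 1) with h | h
    · subst h; simp
    · rw [Pi.single_apply, if_neg (by simpa [Fin.ext_iff] using fun hh => h hh.symm), if_neg h]
  have hφapp : ∀ i : ι, φ i (Pi.single (⟨k, hkd⟩ : Fin d) 1) =
      (k.choose (i.2 : ℕ) : F) * (i.1 : F) ^ (k - (i.2 : ℕ)) := by
    intro i
    simp only [φ, LinearMap.sum_apply, LinearMap.smul_apply, LinearMap.proj_apply, smul_eq_mul]
    rw [Finset.sum_eq_single (⟨k, hkd⟩ : Fin d)]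
    · simp
    · intro b _ hb
      rw [Pi.single_apply, if_neg hb, mul_zero]
    · simp
  rw [hKapp] at happ
  rw [← happ]
  simp only [LinearMap.sum_apply, LinearMap.smul_apply, smul_eq_mul, hφapp]
  have huniv : (Finset.univ : Finset ι) =
      (Finset.univ : Finset {x // x ∈ Sf}).sigma (fun s => (Finset.univ : Finset (Fin (mf s.1)))) :=
    (Finset.univ_sigma_univ).symm
  rw [huniv, Finset.sum_sigma]
  have huniv2 : (Finset.univ : Finset {x // x ∈ Sf}) = Sf.attach := rfl
  rw [huniv2, ← Finset.sum_attach Sf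
    (fun s => ∑ u ∈ Finset.range (mf s),
      (if h : s ∈ Sf then if h2 : u < mf s then γ ⟨⟨s, h⟩, ⟨u, h2⟩⟩ else 0 else 0) *
        ((k.choose u : F) * s ^ (k - u)))]
  refine Finset.sum_congr rfl fun s _ => ?_
  rw [← Fin.sum_univ_eq_sum_range]
  refine Finset.sum_congr rfl fun u _ => ?_
  rw [dif_pos s.2, dif_pos u.2]

end OneDimensional

lemma coeff_prod_add_pow {F : Type*} [Field F] {n : ℕ} (c : Fin n → F) (v u : Fin n → ℕ) :
    MvPolynomial.coeff (Finsupp.equivFunOnFinite.symm u)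
      (∏ i, (X i + C (c i)) ^ (v i) : MvPolynomial (Fin n) F) =
    ∏ i, (((v i).choose (u i) : F) * (c i) ^ (v i - u i)) := by
  classical
  have hfac : ∀ i, ((X i + C (c i) : MvPolynomial (Fin n) F)) ^ v i =
      ∑ j ∈ Finset.range (v i + 1),
        C (((v i).choose j : F) * (c i) ^ (v i - j)) * (X i) ^ j := by
    intro i
    rw [add_pow]
    refine Finset.sum_congr rfl fun j hj => ?_
    rw [map_mul, map_pow, ← C_eq_coe_nat]
    ring
  rw [Finset.prod_congr rfl fun i _ => hfac i, Finset.prod_univ_sum]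
  have hterm : ∀ w : Fin n → ℕ,
      (∏ i, (C (((v i).choose (w i) : F) * (c i) ^ (v i - w i)) * (X i : MvPolynomial (Fin n) F) ^ w i)) =
      C (∏ i, ((v i).choose (w i) : F) * (c i) ^ (v i - w i)) *
        monomial (Finsupp.equivFunOnFinite.symm w) (1 : F) := by
    intro w
    rw [Finset.prod_mul_distrib, map_prod]
    congr 1
    rw [monic_monomial_eq, Finsupp.prod_fintype _ _ (fun _ => pow_zero _)]
    rfl
  simp only [coeff_sum, hterm, coeff_C_mul, coeff_monomial]
  have hcond : ∀ w : Fin n → ℕ,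
      ((Finsupp.equivFunOnFinite.symm w = Finsupp.equivFunOnFinite.symm u) ↔ w = u) :=
    fun w => Finsupp.equivFunOnFinite.symm.injective.eq_iff
  simp only [mul_ite, mul_one, mul_zero]
  rw [Finset.sum_congr rfl fun w _ => by
    rw [show (if Finsupp.equivFunOnFinite.symm w = Finsupp.equivFunOnFinite.symm u
        then (∏ i, ((v i).choose (w i) : F) * (c i) ^ (v i - w i)) else 0)
      = (if w = u then (∏ i, ((v i).choose (w i) : F) * (c i) ^ (v i - w i)) else 0) from by
        simp only [hcond]]]
  rw [Finset.sum_ite_eq' (Fintype.piFinset fun i => Finset.range (v i + 1)) u]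
  by_cases hu : u ∈ Fintype.piFinset fun i => Finset.range (v i + 1)
  · rw [if_pos hu]
  · rw [if_neg hu]
    simp only [Fintype.mem_piFinset, Finset.mem_range, not_forall, not_lt] at hu
    obtain ⟨j, hj⟩ := hu
    refine (Finset.prod_eq_zero (Finset.mem_univ j) ?_).symm
    rw [Nat.choose_eq_zero_of_lt (by omega), Nat.cast_zero, zero_mul]

lemma taylorCoeff_monomial {F : Type*} [Field F] {n : ℕ} (v : Fin n →₀ ℕ) (a : F)
    (s : Fin n → F) (u : Fin n → ℕ) :
    taylorCoeff (monomial v a) s (Finsupp.equivFunOnFinite.symm u) =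
      a * ∏ i, (((v i).choose (u i) : F) * (s i) ^ (v i - u i)) := by
  rw [taylorCoeff, aeval_monomial, algebraMap_eq,
    Finsupp.prod_fintype _ _ (fun _ => pow_zero _), coeff_C_mul,
    coeff_prod_add_pow s (fun i => v i) u]

/-- Existence of the universal linear relation: with `t = (d_1 - 1, …, d_n - 1)`, there
are constants `α^{(s)}_u` (for `s ∈ S`, `u < m(s)`), independent of `f`, such that
`f_t = Σ_{s ∈ S} Σ_{u < m(s)} α^{(s)}_u f_u(s)` for every `f` with `deg f ≤ t_1 + ⋯ + t_n`. -/
theorem stmt_8 {F : Type*} [Field F] {n : ℕ} (hn : 1 ≤ n)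
    (S : Fin n → Finset F) (hS : ∀ i, (S i).Nonempty)
    (m : Fin n → F → ℕ) (hm : ∀ i, ∀ s ∈ S i, 1 ≤ m i s) :
    ∃ α : (Fin n → F) → (Fin n → ℕ) → F,
      ∀ f : MvPolynomial (Fin n) F,
        f.totalDegree ≤ ∑ i, (dSize S m i - 1) →
        coeff (Finsupp.equivFunOnFinite.symm fun i => dSize S m i - 1) f =
          ∑ s ∈ Fintype.piFinset S,
            ∑ u ∈ Fintype.piFinset (fun i => Finset.range (m i (s i))),
              α s u * taylorCoeff f s (Finsupp.equivFunOnFinite.symm u) := by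
  classical
  choose β hβ using fun i => oneDim (S i) (hS i) (m i) (hm i)
  have hβ' : ∀ (i : Fin n), ∀ k ≤ dSize S m i - 1,
      (∑ s ∈ S i, ∑ u ∈ Finset.range (m i s), β i s u * ((k.choose u : F) * s ^ (k - u))) =
        if k = dSize S m i - 1 then 1 else 0 := hβ
  refine ⟨fun s u => ∏ i, β i (s i) (u i), fun f hf => ?_⟩
  -- key per-monomial statement
  have key : ∀ v : Fin n →₀ ℕ, ∀ a : F, (∑ i, v i) ≤ ∑ i, (dSize S m i - 1) →
      coeff (Finsupp.equivFunOnFinite.symm fun i => dSize S m i - 1) (monomial v a) =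
        ∑ s ∈ Fintype.piFinset S,
          ∑ u ∈ Fintype.piFinset (fun i => Finset.range (m i (s i))),
            (∏ i, β i (s i) (u i)) * taylorCoeff (monomial v a) s
              (Finsupp.equivFunOnFinite.symm u) := by
    intro v a hv
    have hrw : ∀ (s : Fin n → F), ∀ (u : Fin n → ℕ),
        (∏ i, β i (s i) (u i)) * taylorCoeff (monomial v a) s (Finsupp.equivFunOnFinite.symm u)
        = a * ∏ i, (β i (s i) (u i) * (((v i).choose (u i) : F) * (s i) ^ (v i - u i))) := by
      intro s u
      rw [taylorCoeff_monomial]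
      conv_rhs => rw [Finset.prod_mul_distrib]
      ring
    rw [Finset.sum_congr rfl fun s _ => Finset.sum_congr rfl fun u _ => hrw s u]
    have hinner : ∀ s ∈ Fintype.piFinset S,
        ∑ u ∈ Fintype.piFinset (fun i => Finset.range (m i (s i))),
          (a * ∏ i, (β i (s i) (u i) * (((v i).choose (u i) : F) * (s i) ^ (v i - u i))))
        = a * ∏ i, ∑ u ∈ Finset.range (m i (s i)),
            β i (s i) u * (((v i).choose u : F) * (s i) ^ (v i - u)) := by
      intro s _
      rw [← Finset.mul_sum, Finset.prod_univ_sum]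
    rw [Finset.sum_congr rfl hinner, ← Finset.mul_sum,
      ← Finset.prod_univ_sum S (fun i x => ∑ u ∈ Finset.range (m i x),
          β i x u * (((v i).choose u : F) * x ^ (v i - u)))]
    by_cases hvt : ∀ i, v i = dSize S m i - 1
    · have hveq : v = (Finsupp.equivFunOnFinite.symm fun i => dSize S m i - 1) := by
        ext i
        simpa using hvt i
      rw [coeff_monomial, if_pos hveq]
      have : ∀ i ∈ Finset.univ, (∑ s ∈ S i, ∑ u ∈ Finset.range (m i s),
          β i s u * (((v i).choose u : F) * s ^ (v i - u))) = 1 := by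
        intro i _
        rw [hβ' i (v i) (le_of_eq (hvt i)), if_pos (hvt i)]
      rw [Finset.prod_congr rfl this, Finset.prod_const_one, mul_one]
    · push_neg at hvt
      obtain ⟨j0, hj0⟩ := hvt
      have hne : v ≠ (Finsupp.equivFunOnFinite.symm fun i => dSize S m i - 1) := by
        intro h
        apply hj0
        rw [h]
        simp
      rw [coeff_monomial, if_neg hne]
      have hex : ∃ j, v j < dSize S m j - 1 := by
        by_contra hcon
        push_neg at hcon
        have h1 : ∑ i, (dSize S m i - 1) ≤ ∑ i, v i :=
          Finset.sum_le_sum fun i _ => hcon i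
        have h2 : ∑ i, (dSize S m i - 1) = ∑ i, v i := le_antisymm h1 hv
        have := (Finset.sum_eq_sum_iff_of_le fun i _ => hcon i).1 h2
        exact hj0 ((this j0 (Finset.mem_univ j0)).symm)
      obtain ⟨j, hj⟩ := hex
      rw [Finset.prod_eq_zero (Finset.mem_univ j), mul_zero]
      rw [hβ' j (v j) (by omega), if_neg (by omega)]
  -- linearity reduction
  have htc : ∀ s u, taylorCoeff f s u =
      ∑ v ∈ f.support, taylorCoeff (monomial v (coeff v f)) s u := by
    intro s u
    unfold taylorCoeff
    conv_lhs => rw [f.as_sum]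
    rw [map_sum, coeff_sum]
  conv_lhs => rw [f.as_sum]
  rw [coeff_sum]
  simp only [htc, Finset.mul_sum]
  rw [Finset.sum_congr rfl fun s _ => Finset.sum_comm, Finset.sum_comm]
  refine Finset.sum_congr rfl fun v hv => ?_
  refine key v (coeff v f) ?_
  calc (∑ i, v i) = v.sum fun _ e => e := (Finsupp.sum_fintype v (fun _ e => e) (fun _ => rfl)).symm
  _ ≤ f.totalDegree := le_totalDegree hv
  _ ≤ _ := hf
end

section
/- Let t = (d_1 − 1, ..., d_n − 1). If two families of constants (α^{(s)}_u) and (α'^{(s)}_u) in F, indexed by s ∈ S and u < m(s), both satisfy f_t = Σ_{s ∈ S} Σ_{u < m(s)} α^{(s)}_u f_u(s) for every polynomial f ∈ F[x_1,...,x_n] with deg f ≤ t_1 + ⋯ + t_n, then α^{(s)}_u = α'^{(s)}_u for all s and u. -/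
open MvPolynomial

/-!
Hermite interpolation in one variable: since the factors `(X - a)^{m(a)}`, `a ∈ S_i`, are pairwise
coprime, there is `p_i` of degree `< d_i` whose Taylor coefficients `(p_i)_u(a)`, `u < m_i(a)`, are
all zero except the one at `(s_i, u_i)`, which is `1`. The product `f = ∏ p_i(x_i)` has total degree
`≤ Σ t_i`, its Taylor data on the grid is the indicator of `(s, u)`, and its coefficient `f_t` is
therefore equal to both `α^{(s)}_u` and `α'^{(s)}_u`.
-/

namespace Polynomial

theorem taylor_coeff_eq_of_X_sub_C_pow_dvd_sub {R : Type*} [CommRing R] {a : R} {k u : ℕ}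
    {p q : R[X]} (h : (X - C a) ^ k ∣ p - q) (hu : u < k) :
    (taylor a p).coeff u = (taylor a q).coeff u := by
  have hX : X ^ k ∣ taylor a (p - q) := by
    simpa [taylor_X, taylor_C] using _root_.map_dvd (taylorAlgHom a) h
  rw [← sub_eq_zero, ← coeff_sub, ← map_sub]
  exact X_pow_dvd_iff.mp hX u hu

theorem exists_natDegree_lt_taylor_coeff_eq_ite {F : Type*} [Field F] [DecidableEq F]
    (S : Finset F) (m : F → ℕ) {s₀ : F} (hs₀ : s₀ ∈ S) {u₀ : ℕ} (hu₀ : u₀ < m s₀) :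
    ∃ p : F[X], p.natDegree < ∑ a ∈ S, m a ∧
      ∀ a ∈ S, ∀ u < m a, (taylor a p).coeff u = if a = s₀ ∧ u = u₀ then 1 else 0 := by
  set g := ∏ a ∈ S, (X - C a) ^ m a
  set q := ∏ a ∈ S.erase s₀, (X - C a) ^ m a
  have hg : g.Monic := monic_prod_of_monic _ _ fun a _ => (monic_X_sub_C a).pow _
  have hg_deg : g.natDegree = ∑ a ∈ S, m a := by
    rw [natDegree_prod_of_monic _ _ fun a _ => (monic_X_sub_C a).pow _]
    simp
  obtain ⟨A, B, hAB⟩ : IsCoprime ((X - C s₀) ^ m s₀) q :=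
    IsCoprime.prod_right fun a ha => (isCoprime_X_sub_C_of_isUnit_sub
      (sub_ne_zero.mpr (Finset.ne_of_mem_erase ha).symm).isUnit).pow
  set p₁ := B * q * (X - C s₀) ^ u₀
  have hp₁ : ∀ a ∈ S, (X - C a) ^ m a ∣ p₁ %ₘ g - p₁ := fun a ha => by
    rw [modByMonic_eq_sub_mul_div p₁ g, sub_sub_cancel_left, dvd_neg]
    exact (Finset.dvd_prod_of_mem _ ha).mul_right _
  refine ⟨p₁ %ₘ g, ?_, fun a ha u hu => ?_⟩
  · rw [← hg_deg]
    refine natDegree_modByMonic_lt _ hg fun h1 => ?_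
    have := congrArg natDegree h1
    rw [hg_deg, natDegree_one, ← Finset.add_sum_erase _ _ hs₀] at this
    omega
  by_cases has : a = s₀
  · subst has
    have hdvd : (X - C a) ^ m a ∣ p₁ %ₘ g - (X - C a) ^ u₀ := by
      have hmod : (X - C a) ^ m a ∣ p₁ - (X - C a) ^ u₀ :=
        ⟨-A * (X - C a) ^ u₀, by linear_combination (X - C a) ^ u₀ * hAB⟩
      simpa using dvd_add (hp₁ a ha) hmod
    rw [taylor_coeff_eq_of_X_sub_C_pow_dvd_sub hdvd hu]
    simp [taylor_X, taylor_C, coeff_X_pow, eq_comm]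
  · have hq : (X - C a) ^ m a ∣ q := Finset.dvd_prod_of_mem _ (Finset.mem_erase.mpr ⟨has, ha⟩)
    have hq₁ : (X - C a) ^ m a ∣ p₁ := (hq.mul_left B).mul_right _
    have hdvd : (X - C a) ^ m a ∣ p₁ %ₘ g - 0 := by simpa using dvd_add (hp₁ a ha) hq₁
    rw [taylor_coeff_eq_of_X_sub_C_pow_dvd_sub hdvd hu, if_neg fun h => has h.1, map_zero,
      coeff_zero]

end Polynomial

section toMvPolynomial

variable {R σ : Type*} [CommSemiring R]

theorem Polynomial.toMvPolynomial_eq_sum_monomial (i : σ) (p : Polynomial R) :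
    p.toMvPolynomial i =
      ∑ k ∈ p.support, MvPolynomial.monomial (Finsupp.single i k) (p.coeff k) := by
  conv_lhs => rw [p.as_sum_support_C_mul_X_pow]
  simp only [map_sum]
  refine Finset.sum_congr rfl fun k _ => ?_
  simp [Polynomial.toMvPolynomial, MvPolynomial.X_pow_eq_monomial, MvPolynomial.C_mul_monomial]

theorem Polynomial.totalDegree_toMvPolynomial_le (i : σ) (p : Polynomial R) :
    (p.toMvPolynomial i).totalDegree ≤ p.natDegree := by
  rw [p.toMvPolynomial_eq_sum_monomial]
  refine (totalDegree_finsetSum _ _).trans (Finset.sup_le fun k hk => ?_)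
  exact (totalDegree_monomial_le _ _).trans
    (by simpa using Polynomial.le_natDegree_of_mem_supp k hk)

theorem MvPolynomial.coeff_prod_toMvPolynomial [Fintype σ] [DecidableEq σ]
    (p : σ → Polynomial R) (u : σ → ℕ) :
    coeff (Finsupp.equivFunOnFinite.symm u) (∏ i, (p i).toMvPolynomial i) =
      ∏ i, (p i).coeff (u i) := by
  simp_rw [Polynomial.toMvPolynomial_eq_sum_monomial, Finset.prod_univ_sum, coeff_sum,
    ← monomial_sum_prod, ← Finsupp.equivFunOnFinite_symm_eq_sum, coeff_monomial,
    Finsupp.equivFunOnFinite.symm.injective.eq_iff, Finset.sum_ite_eq']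
  split_ifs with hu
  · rfl
  · obtain ⟨i, hi⟩ : ∃ i, u i ∉ (p i).support := by simpa [Fintype.mem_piFinset] using hu
    exact (Finset.prod_eq_zero (Finset.mem_univ i) (Polynomial.notMem_support_iff.mp hi)).symm

theorem MvPolynomial.aeval_X_add_C_toMvPolynomial (s : σ → R) (i : σ) (p : Polynomial R) :
    aeval (fun j => X j + C (s j)) (p.toMvPolynomial i) =
      (Polynomial.taylor (s i) p).toMvPolynomial i := by
  rw [aeval_toMvPolynomial, Polynomial.taylor_apply, Polynomial.toMvPolynomial,
    Polynomial.aeval_comp]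
  simp

end toMvPolynomial

theorem taylorCoeff_prod_toMvPolynomial {F : Type*} [Field F] {n : ℕ} (p : Fin n → Polynomial F)
    (s : Fin n → F) (u : Fin n → ℕ) :
    taylorCoeff (∏ i, (p i).toMvPolynomial i) s (Finsupp.equivFunOnFinite.symm u) =
      ∏ i, (Polynomial.taylor (s i) (p i)).coeff (u i) := by
  simp_rw [taylorCoeff, map_prod, aeval_X_add_C_toMvPolynomial, coeff_prod_toMvPolynomial]

theorem exists_totalDegree_le_taylorCoeff_eq_ite {F : Type*} [Field F] [DecidableEq F] {n : ℕ}
    (S : Fin n → Finset F) (m : Fin n → F → ℕ) {s₀ : Fin n → F} (hs₀ : ∀ i, s₀ i ∈ S i)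
    {u₀ : Fin n → ℕ} (hu₀ : ∀ i, u₀ i < m i (s₀ i)) :
    ∃ f : MvPolynomial (Fin n) F, f.totalDegree ≤ ∑ i, (dSize S m i - 1) ∧
      ∀ s, (∀ i, s i ∈ S i) → ∀ u : Fin n → ℕ, (∀ i, u i < m i (s i)) →
        taylorCoeff f s (Finsupp.equivFunOnFinite.symm u) = if s = s₀ ∧ u = u₀ then 1 else 0 := by
  choose p hp_deg hp_taylor using fun i =>
    Polynomial.exists_natDegree_lt_taylor_coeff_eq_ite (S i) (m i) (hs₀ i) (hu₀ i)
  refine ⟨∏ i, (p i).toMvPolynomial i, ?_, fun s hs u hu => ?_⟩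
  · refine (totalDegree_finsetProd _ _).trans (Finset.sum_le_sum fun i _ => ?_)
    have := hp_deg i
    exact (Polynomial.totalDegree_toMvPolynomial_le _ _).trans (by unfold dSize; omega)
  · simp_rw [taylorCoeff_prod_toMvPolynomial, fun i => hp_taylor i (s i) (hs i) (u i) (hu i),
      Fintype.prod_boole, funext_iff, forall_and]

theorem stmt_9_general {F : Type*} [Field F] {n : ℕ}
    (S : Fin n → Finset F)
    (m : Fin n → F → ℕ)
    (α α' : (Fin n → F) → (Fin n → ℕ) → F)
    (hα : ∀ f : MvPolynomial (Fin n) F,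
      f.totalDegree ≤ ∑ i, (dSize S m i - 1) →
      coeff (Finsupp.equivFunOnFinite.symm fun i => dSize S m i - 1) f =
        ∑ s ∈ Fintype.piFinset S,
          ∑ u ∈ Fintype.piFinset (fun i => Finset.range (m i (s i))),
            α s u * taylorCoeff f s (Finsupp.equivFunOnFinite.symm u))
    (hα' : ∀ f : MvPolynomial (Fin n) F,
      f.totalDegree ≤ ∑ i, (dSize S m i - 1) →
      coeff (Finsupp.equivFunOnFinite.symm fun i => dSize S m i - 1) f =
        ∑ s ∈ Fintype.piFinset S,
          ∑ u ∈ Fintype.piFinset (fun i => Finset.range (m i (s i))),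
            α' s u * taylorCoeff f s (Finsupp.equivFunOnFinite.symm u)) :
    ∀ s : Fin n → F, (∀ i, s i ∈ S i) →
      ∀ u : Fin n → ℕ, (∀ i, u i < m i (s i)) → α s u = α' s u := by
  intro s₀ hs₀ u₀ hu₀
  classical
  obtain ⟨f, hf_deg, hf⟩ := exists_totalDegree_le_taylorCoeff_eq_ite S m hs₀ hu₀
  have collapse : ∀ β : (Fin n → F) → (Fin n → ℕ) → F,
      ∑ s ∈ Fintype.piFinset S, ∑ u ∈ Fintype.piFinset (fun i => Finset.range (m i (s i))),
        β s u * taylorCoeff f s (Finsupp.equivFunOnFinite.symm u) = β s₀ u₀ := by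
    intro β
    rw [Finset.sum_congr rfl fun s hs => Finset.sum_congr rfl fun u hu => by
      rw [hf s (Fintype.mem_piFinset.mp hs) u (by simpa using hu)]]
    simp [ite_and, Fintype.mem_piFinset, hs₀, hu₀]
  rw [← collapse α, ← collapse α', ← hα f hf_deg, ← hα' f hf_deg]

/-- Uniqueness of the coefficients in the universal linear relation: two families of
constants both satisfying `f_t = Σ_{s ∈ S} Σ_{u < m(s)} α^{(s)}_u f_u(s)` for all `f`
with `deg f ≤ t_1 + ⋯ + t_n` (where `t = (d_1 - 1, …, d_n - 1)`) must agree on all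
relevant indices `s ∈ S`, `u < m(s)`. -/
theorem stmt_9 {F : Type*} [Field F] {n : ℕ} (hn : 1 ≤ n)
    (S : Fin n → Finset F) (hS : ∀ i, (S i).Nonempty)
    (m : Fin n → F → ℕ) (hm : ∀ i, ∀ s ∈ S i, 1 ≤ m i s)
    (α α' : (Fin n → F) → (Fin n → ℕ) → F)
    (hα : ∀ f : MvPolynomial (Fin n) F,
      f.totalDegree ≤ ∑ i, (dSize S m i - 1) →
      coeff (Finsupp.equivFunOnFinite.symm fun i => dSize S m i - 1) f =
        ∑ s ∈ Fintype.piFinset S,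
          ∑ u ∈ Fintype.piFinset (fun i => Finset.range (m i (s i))),
            α s u * taylorCoeff f s (Finsupp.equivFunOnFinite.symm u))
    (hα' : ∀ f : MvPolynomial (Fin n) F,
      f.totalDegree ≤ ∑ i, (dSize S m i - 1) →
      coeff (Finsupp.equivFunOnFinite.symm fun i => dSize S m i - 1) f =
        ∑ s ∈ Fintype.piFinset S,
          ∑ u ∈ Fintype.piFinset (fun i => Finset.range (m i (s i))),
            α' s u * taylorCoeff f s (Finsupp.equivFunOnFinite.symm u)) :
    ∀ s : Fin n → F, (∀ i, s i ∈ S i) →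
      ∀ u : Fin n → ℕ, (∀ i, u i < m i (s i)) → α s u = α' s u :=
  stmt_9_general S m α α' hα hα'
end

section
/- If every S_i consists of a single element a_i carried with multiplicity t_i + 1, then f[S] = f_t(a) for every f ∈ F[x_1,...,x_n], where a = (a_1,...,a_n) and t = (t_1,...,t_n). -/
/-!
Substituting `x ↦ x + a` turns each generator `(x_i - a_i)^(t_i + 1)` into the monomial
`x_i^(t_i + 1)`, so every element of the ideal has Taylor coefficient `0` at `t`, and
`f_t(a) = r_t(a)`. For any monomial order, the shift of a monomial `x^u` is monic of degree `u`;
as every monomial `x^u` of `r` has `u ≤ t`, the shifted monomial contributes to `x^t` only when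
`u = t`, and then with coefficient `1`. Hence `r_t(a)` is the coefficient of `x^t` in `r`.
-/

open MvPolynomial

namespace MvPolynomial

variable {σ R : Type*} [CommRing R]

lemma coeff_eq_zero_of_mem_span_X_pow {w : σ → ℕ} {p : MvPolynomial σ R}
    (hp : p ∈ Ideal.span (Set.range fun i => (X i : MvPolynomial σ R) ^ w i))
    {u : σ →₀ ℕ} (hu : ∀ i, u i < w i) : coeff u p = 0 := by
  have hspan : Set.range (fun i => (X i : MvPolynomial σ R) ^ w i) =
      (fun s => monomial s (1 : R)) '' Set.range fun i => Finsupp.single i (w i) := by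
    rw [← Set.range_comp]
    simp [Function.comp_def, X_pow_eq_monomial]
  rw [hspan, mem_ideal_span_monomial_image] at hp
  by_contra hne
  obtain ⟨_, ⟨i, rfl⟩, hle⟩ := hp u (mem_support_iff.mpr hne)
  exact (hu i).not_ge (by simpa using hle i)

lemma aeval_X_add_C_mem_span_X_pow {a : σ → R} {w : σ → ℕ} {p : MvPolynomial σ R}
    (hp : p ∈ Ideal.span (Set.range fun i => (X i - C (a i)) ^ w i)) :
    aeval (fun i => X i + C (a i)) p ∈
      Ideal.span (Set.range fun i => (X i : MvPolynomial σ R) ^ w i) := by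
  have hmap := Ideal.mem_map_of_mem (aeval (R := R) fun i => X i + C (a i)) hp
  rw [Ideal.map_span, ← Set.range_comp] at hmap
  convert hmap using 3
  ext i
  simp

end MvPolynomial

namespace MonomialOrder

variable {σ R : Type*} [CommRing R] (m : MonomialOrder σ)

lemma monic_prod_X_add_C_pow (a : σ → R) (u : σ →₀ ℕ) :
    m.Monic (u.prod fun i k => (X i + C (a i)) ^ k) :=
  Monic.prod fun i _ => (m.monic_X_add_C i (a i)).pow

lemma degree_prod_X_add_C_pow [Nontrivial R] (a : σ → R) (u : σ →₀ ℕ) :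
    m.degree (u.prod fun i k => (X i + C (a i)) ^ k) = u := by
  have hpow (i : σ) (k : ℕ) : m.degree ((X i + C (a i)) ^ k) = Finsupp.single i k := by
    rw [m.degree_pow_of_pow_leadingCoeff_ne_zero, m.degree_X_add_C, Finsupp.smul_single_one]
    simp [(m.monic_X_add_C i (a i)).leadingCoeff_eq_one]
  rw [Finsupp.prod, m.degree_prod_of_regular, Finset.sum_congr rfl fun i _ => hpow i (u i)]
  · exact u.sum_single
  · intro i _
    rw [((m.monic_X_add_C i (a i)).pow).leadingCoeff_eq_one]
    exact isRegular_one

end MonomialOrder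

namespace MvPolynomial

variable {R : Type*} [CommRing R] {n : ℕ}

lemma coeff_prod_X_add_C_pow_of_le (a : Fin n → R) {u t : Fin n →₀ ℕ} (hut : u ≤ t) :
    coeff t (u.prod fun i k => (X i + C (a i)) ^ k) = if u = t then 1 else 0 := by
  nontriviality R
  set m : MonomialOrder (Fin n) := MonomialOrder.lex
  have hdeg := m.degree_prod_X_add_C_pow a u
  split_ifs with h
  · subst h
    have hcoeff := (m.monic_prod_X_add_C_pow a u).coeff_degree
    rwa [hdeg] at hcoeff
  · exact m.coeff_eq_zero_of_lt (by rw [hdeg]; exact m.toSyn_strictMono (lt_of_le_of_ne hut h))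

end MvPolynomial

section Taylor

variable {F : Type*} [Field F] {n : ℕ}

lemma memPointIdeal_of_mem_span {a : Fin n → F} {w : Fin n → ℕ} {f : MvPolynomial (Fin n) F}
    (hf : f ∈ Ideal.span (Set.range fun i => (X i - C (a i)) ^ w i)) : memPointIdeal f a w :=
  fun _ hu => coeff_eq_zero_of_mem_span_X_pow (aeval_X_add_C_mem_span_X_pow hf) hu

lemma taylorCoeff_sub (f g : MvPolynomial (Fin n) F) (s : Fin n → F) (u : Fin n →₀ ℕ) :
    taylorCoeff (f - g) s u = taylorCoeff f s u - taylorCoeff g s u := by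
  simp [taylorCoeff]

lemma taylorCoeff_eq_coeff_of_degreeOf_le (a : Fin n → F) {r : MvPolynomial (Fin n) F}
    {t : Fin n →₀ ℕ} (hrt : ∀ i, r.degreeOf i ≤ t i) : taylorCoeff r a t = coeff t r := by
  have hsupp : ∀ u ∈ r.support, u ≤ t := fun u hu i => (monomial_le_degreeOf i hu).trans (hrt i)
  conv_lhs => rw [taylorCoeff, r.as_sum]
  simp only [map_sum, coeff_sum, aeval_monomial, algebraMap_eq, coeff_C_mul]
  rw [Finset.sum_congr rfl fun u hu => by rw [coeff_prod_X_add_C_pow_of_le a (hsupp u hu)]]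
  simp only [mul_ite, mul_one, mul_zero, Finset.sum_ite_eq']
  exact ite_eq_left_iff.mpr fun h => (notMem_support_iff.mp h).symm

end Taylor

theorem stmt_11_general {F : Type*} [Field F] {n : ℕ}
    (a : Fin n → F) (t : Fin n → ℕ)
    (f r : MvPolynomial (Fin n) F)
    (hr : ∀ i, r.degreeOf i < t i + 1)
    (hfr : f - r ∈ Ideal.span
      (Set.range fun i : Fin n => (X i - C (a i)) ^ (t i + 1))) :
    coeff (Finsupp.equivFunOnFinite.symm t) r =
      taylorCoeff f a (Finsupp.equivFunOnFinite.symm t) := by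
  have hfr_taylor : taylorCoeff (f - r) a (Finsupp.equivFunOnFinite.symm t) = 0 :=
    memPointIdeal_of_mem_span hfr _ fun i => Nat.lt_succ_self (t i)
  rw [taylorCoeff_sub, sub_eq_zero] at hfr_taylor
  rw [hfr_taylor, taylorCoeff_eq_coeff_of_degreeOf_le a fun i => Nat.lt_succ_iff.mp (hr i)]

/-- If every `S_i` consists of the single element `a_i` with multiplicity `t_i + 1`
(so `g_i = (x_i - a_i)^{t_i + 1}` and `d_i = t_i + 1`), then `f[S] = f_t(a)`: the
coefficient of `x^{d - 1} = x^t` in the remainder `r = (f mod (g_1, …, g_n))` equals the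
Taylor coefficient `f_t(a)`. -/
theorem stmt_11 {F : Type*} [Field F] {n : ℕ} (hn : 1 ≤ n)
    (a : Fin n → F) (t : Fin n → ℕ)
    (f r : MvPolynomial (Fin n) F)
    (hr : ∀ i, r.degreeOf i < t i + 1)
    (hfr : f - r ∈ Ideal.span
      (Set.range fun i : Fin n => (X i - C (a i)) ^ (t i + 1))) :
    coeff (Finsupp.equivFunOnFinite.symm t) r =
      taylorCoeff f a (Finsupp.equivFunOnFinite.symm t) :=
  stmt_11_general a t f r hr hfr
end

section
/- Suppose some S_i contains two distinct elements a and b. Let (S_i', m_i') be the multiset obtained from (S_i, m_i) by decreasing the multiplicity of a by one (removing a if its multiplicity becomes 0), and (S_i'', m_i'') the one obtained by decreasing the multiplicity of b by one; let S' and S'' be the product multiset systems in which S_i is replaced by S_i' and S_i'' respectively, the other factors unchanged. Then for every f ∈ F[x_1,...,x_n], f[S] = (f[S'] − f[S''])/(b − a). -/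
/-!
Remainders modulo `(g_1, …, g_n)` are unique: a polynomial of the ideal whose degree in each
`x_i` is below `d_i` vanishes. This goes by induction on `n`: reducing the coefficients of the
powers of `x_0` modulo the ideal of `g_1, …, g_n` leaves a multiple of the monic `g_0` of degree
below `d_0`, hence zero, so every coefficient is a reduced element of that smaller ideal.

Since `g_{i₀} = (x_{i₀} - a) g'_{i₀} = (x_{i₀} - b) g''_{i₀}`, the polynomial
`((x_{i₀} - a) r' - (x_{i₀} - b) r'') / (b - a)` is congruent to `f` and reduced, so it is `r`.
Multiplying by `x_{i₀}` raises the top exponent of `S'` and `S''` to that of `S`, while `r'` and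
`r''` have no monomial of that degree, which gives the recurrence on top coefficients.
-/

open MvPolynomial

namespace MvPolynomial

variable {R : Type*} [CommRing R] {n : ℕ}

theorem finSuccEquiv_aeval_X_zero (q : Polynomial R) :
    finSuccEquiv R n (Polynomial.aeval (X 0) q) = q.map (algebraMap R _) := by
  rw [← Polynomial.aeval_algHom_apply, finSuccEquiv_X_zero,
    ← Polynomial.aeval_map_algebraMap (MvPolynomial (Fin n) R), Polynomial.aeval_X_left_apply]

theorem finSuccEquiv_aeval_X_succ (q : Polynomial R) (j : Fin n) :
    finSuccEquiv R n (Polynomial.aeval (X j.succ) q) = Polynomial.C (Polynomial.aeval (X j) q) := by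
  rw [← Polynomial.aeval_algHom_apply, finSuccEquiv_X_succ, ← Polynomial.algebraMap_eq,
    Polynomial.aeval_algebraMap_apply]

theorem dvd_map_finSuccEquiv (q : Fin (n + 1) → Polynomial R)
    (I : Ideal (MvPolynomial (Fin n) R)) (hI : ∀ j, Polynomial.aeval (X j) (q j.succ) ∈ I)
    {p : MvPolynomial (Fin (n + 1)) R}
    (hp : p ∈ Ideal.span (Set.range fun i => Polynomial.aeval (X i) (q i))) :
    (q 0).map (algebraMap R (MvPolynomial (Fin n) R ⧸ I)) ∣
      (finSuccEquiv R n p).map (Ideal.Quotient.mk I) := by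
  suffices (finSuccEquiv R n p).map (Ideal.Quotient.mk I) ∈
      Ideal.span {(q 0).map (algebraMap R (MvPolynomial (Fin n) R ⧸ I))} by
    obtain ⟨c, hc⟩ := Ideal.mem_span_singleton'.mp this
    exact Dvd.intro_left c hc
  let Φ := (Polynomial.mapRingHom (Ideal.Quotient.mk I)).comp (finSuccEquiv R n).toRingHom
  have hΦ := Ideal.mem_map_of_mem Φ hp
  rw [Ideal.map_span, ← Set.range_comp] at hΦ
  refine Ideal.span_le.mpr (Set.range_subset_iff.mpr fun i => ?_) hΦ
  induction i using Fin.cases with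
  | zero =>
    simp only [Function.comp_apply, Φ, RingHom.comp_apply, RingEquiv.toRingHom_eq_coe,
      RingEquiv.coe_toRingHom, AlgEquiv.coe_ringEquiv, finSuccEquiv_aeval_X_zero,
      Polynomial.coe_mapRingHom, Polynomial.map_map]
    exact Ideal.subset_span rfl
  | succ j =>
    have hj : Ideal.Quotient.mk I (Polynomial.aeval (X j) (q j.succ)) = 0 :=
      Ideal.Quotient.eq_zero_iff_mem.mpr (hI j)
    simp [Φ, finSuccEquiv_aeval_X_succ, hj]

theorem eq_zero_of_mem_span_aeval_monic (q : Fin n → Polynomial R)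
    (hq : ∀ i, (q i).Monic) {p : MvPolynomial (Fin n) R}
    (hp : p ∈ Ideal.span (Set.range fun i => Polynomial.aeval (X i) (q i)))
    (hdeg : ∀ i, p.degreeOf i < (q i).natDegree) : p = 0 := by
  induction n with
  | zero => simpa [Set.range_eq_empty] using hp
  | succ n ih =>
    set I := Ideal.span
      (Set.range fun j : Fin n => Polynomial.aeval (X j : MvPolynomial (Fin n) R) (q j.succ))
    set G := (q 0).map (algebraMap R (MvPolynomial (Fin n) R ⧸ I))
    have hmap : (finSuccEquiv R n p).map (Ideal.Quotient.mk I) = 0 := by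
      rcases subsingleton_or_nontrivial (MvPolynomial (Fin n) R ⧸ I) with _ | _
      · exact Subsingleton.elim _ _
      have hI : ∀ j, Polynomial.aeval (X j) (q j.succ) ∈ I :=
        fun j => Ideal.subset_span (Set.mem_range_self j)
      have hdvd : G ∣ (finSuccEquiv R n p).map (Ideal.Quotient.mk I) :=
        dvd_map_finSuccEquiv q I hI hp
      have hlt : ((finSuccEquiv R n p).map (Ideal.Quotient.mk I)).natDegree < G.natDegree :=
        calc _ ≤ (finSuccEquiv R n p).natDegree := Polynomial.natDegree_map_le
          _ = p.degreeOf 0 := natDegree_finSuccEquiv p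
          _ < (q 0).natDegree := hdeg 0
          _ = G.natDegree := ((hq 0).natDegree_map _).symm
      by_contra hne
      exact ((hq 0).map _).not_dvd_of_natDegree_lt hne hlt hdvd
    have hcoeff (k : ℕ) : (finSuccEquiv R n p).coeff k = 0 := by
      refine ih (fun j => q j.succ) (fun j => hq j.succ) ?_
        fun j => (degreeOf_coeff_finSuccEquiv p j k).trans_lt (hdeg j.succ)
      rw [← Ideal.Quotient.eq_zero_iff_mem, ← Polynomial.coeff_map, hmap, Polynomial.coeff_zero]
    exact (finSuccEquiv R n).map_eq_zero_iff.mp (Polynomial.ext hcoeff)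

theorem coeff_eq_zero_of_degreeOf_lt {σ : Type*} {p : MvPolynomial σ R} {u : σ →₀ ℕ} (i : σ)
    (h : p.degreeOf i < u i) : coeff u p = 0 :=
  notMem_support_iff.mp fun hu => (monomial_le_degreeOf i hu).not_gt h

end MvPolynomial

theorem gPoly_eq_aeval {F : Type*} [Field F] {n : ℕ} (S : Fin n → Finset F) (m : Fin n → F → ℕ)
    (i : Fin n) :
    gPoly S m i = Polynomial.aeval (X i) (∏ s ∈ S i, (Polynomial.X - Polynomial.C s) ^ m i s) := by
  simp [gPoly, map_prod]

theorem eq_zero_of_mem_span_gPoly {F : Type*} [Field F] {n : ℕ} (S : Fin n → Finset F)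
    (m : Fin n → F → ℕ) {p : MvPolynomial (Fin n) F}
    (hp : p ∈ Ideal.span (Set.range (gPoly S m))) (hdeg : ∀ i, p.degreeOf i < dSize S m i) :
    p = 0 := by
  have hmonic (i : Fin n) : (∏ s ∈ S i, (Polynomial.X - Polynomial.C s) ^ m i s).Monic :=
    Polynomial.monic_prod_of_monic _ _ fun s _ => (Polynomial.monic_X_sub_C s).pow _
  refine eq_zero_of_mem_span_aeval_monic _ hmonic ?_ fun i => ?_
  · simpa only [← gPoly_eq_aeval] using hp
  · rw [Polynomial.natDegree_prod_of_monic _ _ fun s _ => (Polynomial.monic_X_sub_C s).pow _]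
    simpa [dSize] using hdeg i

noncomputable def topExponent {F : Type*} {n : ℕ} (S : Fin n → Finset F) (m : Fin n → F → ℕ) :
    Fin n →₀ ℕ :=
  Finsupp.equivFunOnFinite.symm fun i => dSize S m i - 1

section Decrement

variable {F : Type*} [DecidableEq F] {n : ℕ} {S : Fin n → Finset F}
  {m md : Fin n → F → ℕ} {i₀ : Fin n} {a : F}

theorem gPoly_self_eq_X_sub_C_mul [Field F] (ha : a ∈ S i₀) (hma : 1 ≤ m i₀ a)
    (hdec : ∀ i s, md i s = if i = i₀ ∧ s = a then m i s - 1 else m i s) :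
    gPoly S m i₀ = (X i₀ - C a) * gPoly S md i₀ := by
  have hsucc : m i₀ a = md i₀ a + 1 := by simp [hdec]; omega
  have hrest : ∏ s ∈ (S i₀).erase a, (X i₀ - C s : MvPolynomial (Fin n) F) ^ md i₀ s =
      ∏ s ∈ (S i₀).erase a, (X i₀ - C s) ^ m i₀ s :=
    Finset.prod_congr rfl fun s hs => by simp [hdec, Finset.ne_of_mem_erase hs]
  unfold gPoly
  rw [← Finset.mul_prod_erase _ _ ha, ← Finset.mul_prod_erase _ _ ha, hrest, hsucc, pow_succ]
  ring

theorem gPoly_of_ne [Field F]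
    (hdec : ∀ i s, md i s = if i = i₀ ∧ s = a then m i s - 1 else m i s)
    {j : Fin n} (hj : j ≠ i₀) : gPoly S md j = gPoly S m j :=
  Finset.prod_congr rfl fun s _ => by simp [hdec, hj]

theorem dSize_self_add_one (ha : a ∈ S i₀) (hma : 1 ≤ m i₀ a)
    (hdec : ∀ i s, md i s = if i = i₀ ∧ s = a then m i s - 1 else m i s) :
    dSize S md i₀ + 1 = dSize S m i₀ := by
  have hsucc : m i₀ a = md i₀ a + 1 := by simp [hdec]; omega
  have hrest : ∀ s ∈ (S i₀).erase a, md i₀ s = m i₀ s := fun s hs => by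
    simp [hdec, Finset.ne_of_mem_erase hs]
  unfold dSize
  rw [← Finset.add_sum_erase _ _ ha, ← Finset.add_sum_erase _ _ ha, Finset.sum_congr rfl hrest,
    hsucc]
  ring

theorem dSize_of_ne (hdec : ∀ i s, md i s = if i = i₀ ∧ s = a then m i s - 1 else m i s)
    {j : Fin n} (hj : j ≠ i₀) : dSize S md j = dSize S m j :=
  Finset.sum_congr rfl fun s _ => by simp [hdec, hj]

theorem X_sub_C_mul_mem_span_gPoly [Field F] (ha : a ∈ S i₀) (hma : 1 ≤ m i₀ a)
    (hdec : ∀ i s, md i s = if i = i₀ ∧ s = a then m i s - 1 else m i s)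
    {p : MvPolynomial (Fin n) F} (hp : p ∈ Ideal.span (Set.range (gPoly S md))) :
    (X i₀ - C a) * p ∈ Ideal.span (Set.range (gPoly S m)) := by
  refine Submodule.span_induction (fun g hg => ?_) (by simp) (fun _ _ _ _ hx hy => ?_)
    (fun c _ _ hx => ?_) hp
  · obtain ⟨j, rfl⟩ := hg
    by_cases hj : j = i₀
    · subst hj
      rw [← gPoly_self_eq_X_sub_C_mul ha hma hdec]
      exact Ideal.subset_span ⟨j, rfl⟩
    · rw [gPoly_of_ne hdec hj]
      exact Ideal.mul_mem_left _ _ (Ideal.subset_span ⟨j, rfl⟩)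
  · rw [mul_add]; exact Ideal.add_mem _ hx hy
  · rw [smul_eq_mul, mul_left_comm]; exact Ideal.mul_mem_left _ _ hx

theorem degreeOf_X_sub_C_mul_lt [Field F] (ha : a ∈ S i₀) (hma : 1 ≤ m i₀ a)
    (hdec : ∀ i s, md i s = if i = i₀ ∧ s = a then m i s - 1 else m i s)
    {p : MvPolynomial (Fin n) F} (hp : ∀ i, p.degreeOf i < dSize S md i) (i : Fin n) :
    ((X i₀ - C a) * p).degreeOf i < dSize S m i := by
  have hlin : (X i₀ - C a : MvPolynomial (Fin n) F).degreeOf i ≤ if i = i₀ then 1 else 0 := by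
    refine (degreeOf_sub_le _ _ _).trans ?_
    rw [degreeOf_X, degreeOf_C]
    simp
  refine (degreeOf_mul_le _ _ _).trans_lt ?_
  by_cases hi : i = i₀
  · subst hi
    have := dSize_self_add_one ha hma hdec
    simp only [if_true] at hlin
    linarith [hp i]
  · simp only [hi, if_false, nonpos_iff_eq_zero] at hlin
    rw [hlin, zero_add, ← dSize_of_ne hdec hi]
    exact hp i

theorem topExponent_eq_single_add (ha : a ∈ S i₀) (hma : 1 ≤ m i₀ a)
    (hdec : ∀ i s, md i s = if i = i₀ ∧ s = a then m i s - 1 else m i s)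
    (hpos : 0 < dSize S md i₀) :
    topExponent S m = Finsupp.single i₀ 1 + topExponent S md := by
  ext i
  simp only [topExponent, Finsupp.coe_add, Pi.add_apply, Finsupp.single_apply,
    Finsupp.coe_equivFunOnFinite_symm]
  by_cases hi : i₀ = i
  · subst hi
    have := dSize_self_add_one ha hma hdec
    simp only [if_true]
    omega
  · simp [hi, dSize_of_ne hdec (Ne.symm hi)]

theorem coeff_topExponent_X_sub_C_mul [Field F] (ha : a ∈ S i₀) (hma : 1 ≤ m i₀ a)
    (hdec : ∀ i s, md i s = if i = i₀ ∧ s = a then m i s - 1 else m i s)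
    {p : MvPolynomial (Fin n) F} (hp : p.degreeOf i₀ < dSize S md i₀) :
    coeff (topExponent S m) ((X i₀ - C a) * p) = coeff (topExponent S md) p := by
  have hzero : coeff (topExponent S m) p = 0 := by
    refine coeff_eq_zero_of_degreeOf_lt i₀ ?_
    have := dSize_self_add_one ha hma hdec
    rw [topExponent, Finsupp.coe_equivFunOnFinite_symm, ← this, Nat.add_sub_cancel]
    exact hp
  rw [sub_mul, coeff_sub, coeff_C_mul, hzero, mul_zero, sub_zero,
    topExponent_eq_single_add ha hma hdec (Nat.zero_le _ |>.trans_lt hp), coeff_X_mul]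

end Decrement

theorem stmt_12_general {F : Type*} [Field F] [DecidableEq F] {n : ℕ}
    (S : Fin n → Finset F)
    (m : Fin n → F → ℕ) (hm : ∀ i, ∀ s ∈ S i, 1 ≤ m i s)
    (i₀ : Fin n) (a b : F) (ha : a ∈ S i₀) (hb : b ∈ S i₀) (hab : a ≠ b)
    (m' m'' : Fin n → F → ℕ)
    (hm' : ∀ i s, m' i s = if i = i₀ ∧ s = a then m i s - 1 else m i s)
    (hm'' : ∀ i s, m'' i s = if i = i₀ ∧ s = b then m i s - 1 else m i s)
    (f r r' r'' : MvPolynomial (Fin n) F)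
    (hr : ∀ i, r.degreeOf i < dSize S m i)
    (hfr : f - r ∈ Ideal.span (Set.range (gPoly S m)))
    (hr' : ∀ i, r'.degreeOf i < dSize S m' i)
    (hfr' : f - r' ∈ Ideal.span (Set.range (gPoly S m')))
    (hr'' : ∀ i, r''.degreeOf i < dSize S m'' i)
    (hfr'' : f - r'' ∈ Ideal.span (Set.range (gPoly S m''))) :
    coeff (Finsupp.equivFunOnFinite.symm fun i => dSize S m i - 1) r =
      (coeff (Finsupp.equivFunOnFinite.symm fun i => dSize S m' i - 1) r' -
        coeff (Finsupp.equivFunOnFinite.symm fun i => dSize S m'' i - 1) r'') /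
        (b - a) := by
  have hma := hm i₀ a ha
  have hmb := hm i₀ b hb
  have hrec : (C b - C a) * r = (X i₀ - C a) * r' - (X i₀ - C b) * r'' := by
    refine sub_eq_zero.mp (eq_zero_of_mem_span_gPoly S m ?_ fun i => ?_)
    · have hcomb : (C b - C a) * r - ((X i₀ - C a) * r' - (X i₀ - C b) * r'') =
          (X i₀ - C a) * (f - r') - (X i₀ - C b) * (f - r'') - (C b - C a) * (f - r) := by ring
      rw [hcomb]
      exact sub_mem (sub_mem (X_sub_C_mul_mem_span_gPoly ha hma hm' hfr')
        (X_sub_C_mul_mem_span_gPoly hb hmb hm'' hfr'')) (Ideal.mul_mem_left _ _ hfr)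
    · refine (degreeOf_sub_le _ _ _).trans_lt (max_lt ?_ ((degreeOf_sub_le _ _ _).trans_lt
        (max_lt (degreeOf_X_sub_C_mul_lt ha hma hm' hr' i)
          (degreeOf_X_sub_C_mul_lt hb hmb hm'' hr'' i))))
      rw [← C_sub]
      exact (degreeOf_C_mul_le _ _ _).trans_lt (hr i)
  have hcoeff := congrArg (coeff (topExponent S m)) hrec
  rw [← C_sub, coeff_C_mul, coeff_sub, coeff_topExponent_X_sub_C_mul ha hma hm' (hr' i₀),
    coeff_topExponent_X_sub_C_mul hb hmb hm'' (hr'' i₀)] at hcoeff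
  change coeff (topExponent S m) r =
    (coeff (topExponent S m') r' - coeff (topExponent S m'') r'') / (b - a)
  rw [← hcoeff, mul_div_cancel_left₀ _ (sub_ne_zero_of_ne hab.symm)]

/-- The divided-difference recurrence: if `a ≠ b` both lie in `S_{i₀}`, and `m'`
(resp. `m''`) decreases the multiplicity of `a` (resp. `b`) at index `i₀` by one,
then `f[S] = (f[S'] - f[S''])/(b - a)`, where `f[·]` denotes the coefficient of
`x_1^{d_1 - 1} ⋯ x_n^{d_n - 1}` in the corresponding remainder `f mod (g_1, …, g_n)`. -/
theorem stmt_12 {F : Type*} [Field F] [DecidableEq F] {n : ℕ} (hn : 1 ≤ n)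
    (S : Fin n → Finset F) (hS : ∀ i, (S i).Nonempty)
    (m : Fin n → F → ℕ) (hm : ∀ i, ∀ s ∈ S i, 1 ≤ m i s)
    (i₀ : Fin n) (a b : F) (ha : a ∈ S i₀) (hb : b ∈ S i₀) (hab : a ≠ b)
    (m' m'' : Fin n → F → ℕ)
    (hm' : ∀ i s, m' i s = if i = i₀ ∧ s = a then m i s - 1 else m i s)
    (hm'' : ∀ i s, m'' i s = if i = i₀ ∧ s = b then m i s - 1 else m i s)
    (f r r' r'' : MvPolynomial (Fin n) F)
    (hr : ∀ i, r.degreeOf i < dSize S m i)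
    (hfr : f - r ∈ Ideal.span (Set.range (gPoly S m)))
    (hr' : ∀ i, r'.degreeOf i < dSize S m' i)
    (hfr' : f - r' ∈ Ideal.span (Set.range (gPoly S m')))
    (hr'' : ∀ i, r''.degreeOf i < dSize S m'' i)
    (hfr'' : f - r'' ∈ Ideal.span (Set.range (gPoly S m''))) :
    coeff (Finsupp.equivFunOnFinite.symm fun i => dSize S m i - 1) r =
      (coeff (Finsupp.equivFunOnFinite.symm fun i => dSize S m' i - 1) r' -
        coeff (Finsupp.equivFunOnFinite.symm fun i => dSize S m'' i - 1) r'') /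
        (b - a) :=
  stmt_12_general S m hm i₀ a b ha hb hab m' m'' hm' hm'' f r r' r'' hr hfr hr' hfr' hr'' hfr''
end

section
/- Let p be a prime and let (A, m_1) and (B, m_2) be multisets in the prime field F_p = ℤ/pℤ. Define the sumset multiset (A+B, m_3) by m_3(c) = max{ m_1(a) + m_2(b) − 1 : a ∈ A, b ∈ B, a + b = c } for c ∈ A + B. Then d(A+B) ≥ min{ p, d(A) + d(B) − 1 }. -/
open Finset Pointwise

/-!
Cut each multiset into the layers `A_i = {a ∈ A | i < m₁ a}`, so that `d(A) = ∑_{i < s} |A_i|`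
with `s = max m₁`, and likewise for `B` with `t = max m₂`. Along the staircase of index pairs
`(0, 0), …, (s - 1, 0), …, (s - 1, t - 1)` the `s + t - 1` sumsets `A_i + B_j` satisfy
Cauchy–Davenport, and their lower bounds `|A_i| + |B_j| - 1` add up to at least
`d(A) + d(B) - 1`. An element `c` lies in at most `m₃(c)` of these sumsets, because `c = a + b`
with `a ∈ A_i`, `b ∈ B_j` forces `i + j < m₁ a + m₂ b - 1` and the sums `i + j` along the
staircase are distinct.
-/

section Layers

variable {α : Type*}

def layer (A : Finset α) (m : α → ℕ) (i : ℕ) : Finset α := {a ∈ A | i < m a}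

theorem layer_subset (A : Finset α) (m : α → ℕ) (i : ℕ) : layer A m i ⊆ A := filter_subset _ _

theorem layer_nonempty {A : Finset α} {m : α → ℕ} {i : ℕ} (hi : i < A.sup m) :
    (layer A m i).Nonempty :=
  let ⟨a, ha, hia⟩ := Finset.lt_sup_iff.1 hi
  ⟨a, mem_filter.2 ⟨ha, hia⟩⟩

theorem sum_eq_sum_card_layer (A : Finset α) (m : α → ℕ) :
    ∑ a ∈ A, m a = ∑ i ∈ range (A.sup m), #(layer A m i) := by
  simp only [layer, card_filter]
  rw [sum_comm]
  refine sum_congr rfl fun a ha => ?_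
  rw [← sum_filter, sum_const, smul_eq_mul, mul_one]
  have : {i ∈ range (A.sup m) | i < m a} = range (m a) := by
    ext i
    have := le_sup (f := m) ha
    simp only [mem_filter, mem_range]
    omega
  rw [this, card_range]

end Layers

theorem sum_card_le_sum_of_card_filter_mem_le {ι α : Type*} [DecidableEq α] (K : Finset ι)
    (S : Finset α) (C : ι → Finset α) (f : α → ℕ) (hC : ∀ k ∈ K, C k ⊆ S)
    (hf : ∀ c ∈ S, #{k ∈ K | c ∈ C k} ≤ f c) : ∑ k ∈ K, #(C k) ≤ ∑ c ∈ S, f c :=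
  calc ∑ k ∈ K, #(C k) = ∑ k ∈ K, #(S.bipartiteAbove (fun k c => c ∈ C k) k) := by
        refine sum_congr rfl fun k hk => ?_
        rw [bipartiteAbove, filter_mem_eq_inter, inter_eq_right.2 (hC k hk)]
    _ = ∑ c ∈ S, #(K.bipartiteBelow (fun k c => c ∈ C k) c) :=
        sum_card_bipartiteAbove_eq_sum_card_bipartiteBelow _
    _ ≤ ∑ c ∈ S, f c := sum_le_sum hf

theorem sum_range_add_sub_one_le_sum_staircase (x y : ℕ → ℕ) (s t : ℕ) (hx : 1 ≤ x s)
    (hy : 1 ≤ y 0) :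
    ∑ i ∈ range (s + 1), x i + ∑ j ∈ range (t + 1), y j - 1 ≤
      ∑ k ∈ range (s + t + 1), (x (min k s) + y (k - s) - 1) := by
  induction t with
  | zero =>
    calc ∑ i ∈ range (s + 1), x i + ∑ j ∈ range 1, y j - 1
        = ∑ i ∈ range (s + 1), x i + (y 0 - 1) := by rw [sum_range_one]; omega
      _ ≤ ∑ i ∈ range (s + 1), x i + (s + 1) * (y 0 - 1) := by
        gcongr
        exact Nat.le_mul_of_pos_left _ s.succ_pos
      _ = ∑ k ∈ range (s + 1), (x (min k s) + y (k - s) - 1) := by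
        rw [← card_range (s + 1), ← smul_eq_mul, ← sum_const, card_range, ← sum_add_distrib]
        refine sum_congr rfl fun k hk => ?_
        rw [mem_range] at hk
        rw [min_eq_left (show k ≤ s by omega), Nat.sub_eq_zero_of_le (show k ≤ s by omega)]
        omega
  | succ t ih =>
    rw [sum_range_succ y, ← add_assoc s, sum_range_succ _ (s + t + 1), min_eq_right (by omega),
      show s + t + 1 - s = t + 1 by omega]
    omega

section SumsetMult

variable {α : Type*} [DecidableEq α] [Add α]

def sumsetMult (A B : Finset α) (m₁ m₂ : α → ℕ) (c : α) : ℕ :=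
  ((A ×ˢ B).filter fun ab => ab.1 + ab.2 = c).sup fun ab => m₁ ab.1 + m₂ ab.2 - 1

theorem add_lt_sumsetMult {A B : Finset α} {m₁ m₂ : α → ℕ} {a b : α} {i j : ℕ} (ha : a ∈ A)
    (hb : b ∈ B) (hi : i < m₁ a) (hj : j < m₂ b) : i + j < sumsetMult A B m₁ m₂ (a + b) := by
  have hab : (a, b) ∈ (A ×ˢ B).filter fun ab => ab.1 + ab.2 = a + b := by simp [ha, hb]
  have := le_sup (f := fun ab => m₁ ab.1 + m₂ ab.2 - 1) hab
  simp only [sumsetMult] at this ⊢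
  omega

theorem card_filter_mem_add_layer_le (A B : Finset α) (m₁ m₂ : α → ℕ) (I J : ℕ → ℕ)
    (hIJ : ∀ k, I k + J k = k) (N : ℕ) (c : α) :
    #{k ∈ range N | c ∈ layer A m₁ (I k) + layer B m₂ (J k)} ≤ sumsetMult A B m₁ m₂ c := by
  refine (card_le_card fun k hk => ?_).trans (card_range _).le
  obtain ⟨-, a, ha, b, hb, rfl⟩ := by simpa only [mem_filter, mem_add] using hk
  obtain ⟨ha, hi⟩ := mem_filter.1 ha
  obtain ⟨hb, hj⟩ := mem_filter.1 hb
  exact mem_range.2 (hIJ k ▸ add_lt_sumsetMult ha hb hi hj)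

theorem min_le_sum_sumsetMult_of_cauchy_davenport (n : ℕ)
    (hCD : ∀ S T : Finset α, S.Nonempty → T.Nonempty → min n (#S + #T - 1) ≤ #(S + T))
    (A B : Finset α) (m₁ m₂ : α → ℕ) (hA : 0 < A.sup m₁) (hB : 0 < B.sup m₂) :
    min n (∑ a ∈ A, m₁ a + ∑ b ∈ B, m₂ b - 1) ≤ ∑ c ∈ A + B, sumsetMult A B m₁ m₂ c := by
  obtain ⟨s, hs⟩ := Nat.exists_eq_add_one.2 hA
  obtain ⟨t, ht⟩ := Nat.exists_eq_add_one.2 hB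
  set x : ℕ → ℕ := fun i => #(layer A m₁ i)
  set y : ℕ → ℕ := fun j => #(layer B m₂ j)
  set C : ℕ → Finset α := fun k => layer A m₁ (min k s) + layer B m₂ (k - s)
  calc min n (∑ a ∈ A, m₁ a + ∑ b ∈ B, m₂ b - 1)
      ≤ min n (∑ k ∈ range (s + t + 1), (x (min k s) + y (k - s) - 1)) := by
        rw [sum_eq_sum_card_layer A, sum_eq_sum_card_layer B, hs, ht]
        exact min_le_min_left _ <| sum_range_add_sub_one_le_sum_staircase x y s t
          (layer_nonempty (by omega)).card_pos (layer_nonempty (by omega)).card_pos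
    _ ≤ ∑ k ∈ range (s + t + 1), min n (x (min k s) + y (k - s) - 1) :=
        le_sum_of_subadditive _ (min_eq_right (Nat.zero_le n)).le (fun _ _ => by omega) _ _
    _ ≤ ∑ k ∈ range (s + t + 1), #(C k) := by
        refine sum_le_sum fun k hk => hCD _ _ (layer_nonempty ?_) (layer_nonempty ?_)
        all_goals rw [mem_range] at hk; omega
    _ ≤ ∑ c ∈ A + B, sumsetMult A B m₁ m₂ c :=
        sum_card_le_sum_of_card_filter_mem_le _ _ C _
          (fun _ _ => add_subset_add (layer_subset _ _ _) (layer_subset _ _ _))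
          (fun c _ => card_filter_mem_add_layer_le A B m₁ m₂ _ _ (fun k => by omega) _ c)

end SumsetMult

/-- The Cauchy–Davenport theorem for multisets: for multisets `(A, m₁)` and `(B, m₂)` in
`F_p = ℤ/pℤ`, with the sumset multiset `(A + B, m₃)` given by
`m₃(c) = max{m₁(a) + m₂(b) - 1 : a ∈ A, b ∈ B, a + b = c}`, we have
`d(A + B) ≥ min(p, d(A) + d(B) - 1)`. -/
theorem stmt_16 (p : ℕ) (hp : p.Prime)
    (A B : Finset (ZMod p)) (hA : A.Nonempty) (hB : B.Nonempty)
    (m₁ m₂ : ZMod p → ℕ) (hm₁ : ∀ a ∈ A, 1 ≤ m₁ a) (hm₂ : ∀ b ∈ B, 1 ≤ m₂ b)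
    (m₃ : ZMod p → ℕ)
    (hm₃ : ∀ c ∈ A + B, m₃ c =
      ((A ×ˢ B).filter fun ab => ab.1 + ab.2 = c).sup fun ab => m₁ ab.1 + m₂ ab.2 - 1) :
    min p (∑ a ∈ A, m₁ a + ∑ b ∈ B, m₂ b - 1) ≤ ∑ c ∈ A + B, m₃ c := by
  obtain ⟨a, ha⟩ := hA
  obtain ⟨b, hb⟩ := hB
  rw [sum_congr rfl hm₃]
  exact min_le_sum_sumsetMult_of_cauchy_davenport p (fun _ _ => ZMod.cauchy_davenport hp)
    A B m₁ m₂ ((hm₁ a ha).trans (le_sup ha)) ((hm₂ b hb).trans (le_sup hb))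
end

section
/- Let G be an abelian group and let (A, m_1) and (B, m_2) be multisets in G. Define the sumset multiset (A+B, m_3) by m_3(c) = max{ m_1(a) + m_2(b) − 1 : a ∈ A, b ∈ B, a + b = c } for c ∈ A + B. Then deg(A+B, m_3) ≥ deg(A, m_1) + deg(B, m_2). -/
open Finset Pointwise

/-- For multisets `(A, m₁)` and `(B, m₂)` in an abelian group `G`, with the sumset
multiset `(A + B, m₃)` given by `m₃(c) = max{m₁(a) + m₂(b) - 1 : a ∈ A, b ∈ B, a + b = c}`,
and `deg(Y, m) = Σ_{y ∈ Y} (m(y) - 1)`, we have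
`deg(A + B, m₃) ≥ deg(A, m₁) + deg(B, m₂)`. -/
theorem stmt_17 {G : Type*} [AddCommGroup G] [DecidableEq G]
    (A B : Finset G) (hA : A.Nonempty) (hB : B.Nonempty)
    (m₁ m₂ : G → ℕ) (hm₁ : ∀ a ∈ A, 1 ≤ m₁ a) (hm₂ : ∀ b ∈ B, 1 ≤ m₂ b)
    (m₃ : G → ℕ)
    (hm₃ : ∀ c ∈ A + B, m₃ c =
      ((A ×ˢ B).filter fun ab => ab.1 + ab.2 = c).sup fun ab => m₁ ab.1 + m₂ ab.2 - 1) :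
    (∑ a ∈ A, (m₁ a - 1)) + ∑ b ∈ B, (m₂ b - 1) ≤ ∑ c ∈ A + B, (m₃ c - 1) := by
  classical
  obtain ⟨a₀, ha₀A, ha₀max⟩ := A.exists_max_image (fun a => m₁ a - 1) hA
  obtain ⟨b₀, hb₀⟩ := hB
  set K : ℕ := m₁ a₀ - 1 with hK
  have hkey : ∀ a ∈ A, ∀ b ∈ B, (m₁ a - 1) + (m₂ b - 1) ≤ m₃ (a + b) - 1 := by
    intro a ha b hb
    have hmem : a + b ∈ A + B := Finset.add_mem_add ha hb
    have h1 : m₁ a + m₂ b - 1 ≤ m₃ (a + b) := by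
      rw [hm₃ _ hmem]
      have hab : (a, b) ∈ (A ×ˢ B).filter (fun ab => ab.1 + ab.2 = a + b) := by
        simp [Finset.mem_filter, ha, hb]
      exact Finset.le_sup (f := fun ab => m₁ ab.1 + m₂ ab.2 - 1) hab
    have h2 := hm₁ a ha
    have h3 := hm₂ b hb
    omega
  have step1 : (∑ a ∈ A, (m₁ a - 1)) ≤ ∑ c ∈ A + B, min (m₃ c - 1) K := by
    calc ∑ a ∈ A, (m₁ a - 1) ≤ ∑ a ∈ A, min (m₃ (a + b₀) - 1) K := by
          apply Finset.sum_le_sum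
          intro a ha
          have h1 := hkey a ha b₀ hb₀
          have h2 := ha₀max a ha
          omega
      _ = ∑ c ∈ A.image (· + b₀), min (m₃ c - 1) K := by
          rw [Finset.sum_image]
          intro x _ y _ hxy
          exact add_right_cancel hxy
      _ ≤ ∑ c ∈ A + B, min (m₃ c - 1) K := by
          apply Finset.sum_le_sum_of_subset
          intro c hc
          obtain ⟨a, ha, rfl⟩ := Finset.mem_image.mp hc
          exact Finset.add_mem_add ha hb₀
  have step2 : (∑ b ∈ B, (m₂ b - 1)) ≤ ∑ c ∈ A + B, (m₃ c - 1 - K) := by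
    calc ∑ b ∈ B, (m₂ b - 1) ≤ ∑ b ∈ B, (m₃ (a₀ + b) - 1 - K) := by
          apply Finset.sum_le_sum
          intro b hb
          have h1 := hkey a₀ ha₀A b hb
          omega
      _ = ∑ c ∈ B.image (a₀ + ·), (m₃ c - 1 - K) := by
          rw [Finset.sum_image]
          intro x _ y _ hxy
          exact add_left_cancel hxy
      _ ≤ ∑ c ∈ A + B, (m₃ c - 1 - K) := by
          apply Finset.sum_le_sum_of_subset
          intro c hc
          obtain ⟨b, hb, rfl⟩ := Finset.mem_image.mp hc
          exact Finset.add_mem_add ha₀A hb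
  have final : ∑ c ∈ A + B, min (m₃ c - 1) K + ∑ c ∈ A + B, (m₃ c - 1 - K)
      = ∑ c ∈ A + B, (m₃ c - 1) := by
    rw [← Finset.sum_add_distrib]
    apply Finset.sum_congr rfl
    intro c _
    omega
  omega
end

section
/- Let p be a prime, V a vector space over the prime field F_p = ℤ/pℤ, and let (A, m_1) and (B, m_2) be multisets in V with d(A) = r and d(B) = s. Define the sumset multiset (A+B, m_3) by m_3(c) = max{ m_1(a) + m_2(b) − 1 : a ∈ A, b ∈ B, a + b = c } for c ∈ A + B. Then d(A+B) ≥ β_p(r, s). -/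
open Finset Pointwise

/-- The triple `(r, s, N)` satisfies the Hopf–Stiefel condition for the prime `p`:
`p ∣ C(N, k)` for every integer `k` with `N - r < k < s`. -/
def hopfStiefelCond (p r s N : ℕ) : Prop :=
  ∀ k : ℕ, (N : ℤ) - (r : ℤ) < (k : ℤ) → k < s → p ∣ N.choose k

/-- The generalized Hopf–Stiefel number `β_p(r, s)`: the smallest `N` for which
`(r, s, N)` satisfies the Hopf–Stiefel condition for `p`. -/
noncomputable def betaHS (p r s : ℕ) : ℕ :=
  sInf {N : ℕ | hopfStiefelCond p r s N}

/-!
Blow each multiset up to a set: replace `(a, m(a))` by `{a} × S_{m(a)}` in `V × 𝔽_p^t`, where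
`S_m` is the set of digit vectors whose base-`p` value is below `m`. Adding digit vectors modulo
`p` does not increase the base-`p` value, so `S_m + S_n ⊆ S_{m+n-1}`, and the sumset of the
blown-up sets lies in the blow-up of `(A + B, m₃)`. This reduces the theorem to sets. For sets,
embed the vector space additively into a polynomial ring over `𝔽_p` (a domain of characteristic
`p`) and apply the Combinatorial Nullstellensatz to `∏_{c ∈ A + B} (X + Y - c)`: it vanishes on
`A × B`, and its coefficient of `X^(|A+B|-k) Y^k` is `C(|A+B|, k)`.
-/

namespace MvPolynomial

variable {R : Type*} [CommRing R]

open Finsupp in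
theorem coeff_X_add_X_pow (n a b : ℕ) (h : a + b = n) :
    coeff (single 0 a + single 1 b) ((X 0 + X 1 : MvPolynomial (Fin 2) R) ^ n) = n.choose a := by
  have hterm (m : ℕ) : X 0 ^ m * X 1 ^ (n - m) * (n.choose m : MvPolynomial (Fin 2) R) =
      monomial (single 0 m + single 1 (n - m)) (n.choose m : R) := by
    rw [← map_natCast (C (σ := Fin 2)), X_pow_eq_monomial, X_pow_eq_monomial, monomial_mul,
      mul_one, mul_comm, C_mul_monomial, mul_one]
  rw [add_pow, coeff_sum, Finset.sum_eq_single a]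
  · rw [hterm, coeff_monomial, if_pos (by rw [← h, Nat.add_sub_cancel_left])]
  · intro m _ hm
    rw [hterm, coeff_monomial, if_neg]
    intro heq
    simpa [hm] using DFunLike.congr_fun heq 0
  · intro ha
    rw [Finset.mem_range] at ha
    rw [Nat.choose_eq_zero_of_lt (by omega), Nat.cast_zero, mul_zero, coeff_zero]

variable [Nontrivial R]

theorem coeff_prod_X_add_X_sub_C (T : Finset R) {t : Fin 2 →₀ ℕ} (ht : t.degree = #T) :
    coeff t (∏ c ∈ T, (X 0 + X 1 - C c)) = coeff t ((X 0 + X 1 : MvPolynomial (Fin 2) R) ^ #T) := by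
  have hQ : ∏ c ∈ T, (X 0 + X 1 - C c) = Polynomial.aeval (X 0 + X 1 : MvPolynomial (Fin 2) R)
      (∏ c ∈ T, (Polynomial.X - Polynomial.C c)) := by
    simp [map_prod, MvPolynomial.algebraMap_eq]
  have hhom (i : ℕ) : ((X 0 + X 1 : MvPolynomial (Fin 2) R) ^ i).IsHomogeneous i := by
    simpa using ((isHomogeneous_X R 0).add (isHomogeneous_X R 1)).pow i
  rw [hQ, Polynomial.aeval_eq_sum_range, coeff_sum, Finset.sum_eq_single #T]
  · rw [coeff_smul, ← Polynomial.natDegree_finsetProd_X_sub_C_eq_card T (fun c => c),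
      (Polynomial.monic_prod_X_sub_C (fun c => c) T).coeff_natDegree, one_smul]
  · intro i _ hi
    rw [coeff_smul, (hhom i).coeff_eq_zero (by omega), smul_zero]
  · simp

theorem totalDegree_prod_X_add_X_sub_C_le (T : Finset R) :
    (∏ c ∈ T, (X 0 + X 1 - C c) : MvPolynomial (Fin 2) R).totalDegree ≤ #T := by
  refine (totalDegree_finsetProd _ _).trans ?_
  rw [Finset.card_eq_sum_ones]
  refine Finset.sum_le_sum fun c _ => ?_
  refine (totalDegree_sub_C_le _ _).trans ((totalDegree_add _ _).trans ?_)
  simp [totalDegree_X]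

end MvPolynomial

open MvPolynomial in
theorem hopfStiefelCond_card_add {R : Type*} [CommRing R] [IsDomain R] [DecidableEq R]
    (p : ℕ) [CharP R p] (A B : Finset R) : hopfStiefelCond p #A #B #(A + B) := by
  intro k hkA hkB
  set D := #(A + B)
  obtain hDk | hkD := lt_or_ge D k
  · simp [Nat.choose_eq_zero_of_lt hDk]
  by_contra hndvd
  set f : MvPolynomial (Fin 2) R := ∏ c ∈ A + B, (X 0 + X 1 - C c)
  set t : Fin 2 →₀ ℕ := Finsupp.single 0 (D - k) + Finsupp.single 1 k
  have ht : t.degree = D := by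
    simp only [t, map_add, Finsupp.degree_single, Nat.sub_add_cancel hkD]
  have hcoeff : coeff t f ≠ 0 := by
    rw [coeff_prod_X_add_X_sub_C _ ht, coeff_X_add_X_pow _ _ _ (Nat.sub_add_cancel hkD),
      Nat.choose_symm hkD, Ne, CharP.cast_eq_zero_iff R p]
    exact hndvd
  have hdeg : f.totalDegree = t.degree :=
    ((totalDegree_prod_X_add_X_sub_C_le _).trans ht.ge).antisymm
      (le_totalDegree (mem_support_iff.2 hcoeff))
  obtain ⟨x, hx, hfx⟩ := combinatorial_nullstellensatz_exists_eval_nonzero f t hcoeff hdeg ![A, B]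
    (by intro i; fin_cases i <;> simp [t] <;> omega)
  apply hfx
  rw [map_prod]
  exact Finset.prod_eq_zero (Finset.add_mem_add (hx 0) (hx 1)) (by simp)

universe u

theorem Module.Free.exists_injective_linearMap_mvPolynomial (R : Type*) (M : Type u)
    [CommRing R] [AddCommGroup M] [Module R M] [Module.Free R M] :
    ∃ (ι : Type u) (φ : M →ₗ[R] MvPolynomial ι R), Function.Injective φ := by
  let b := Module.Free.chooseBasis R M
  refine ⟨_, Finsupp.linearCombination R MvPolynomial.X ∘ₗ b.repr.toLinearMap, ?_⟩
  rw [LinearMap.coe_comp, LinearEquiv.coe_coe]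
  exact Function.Injective.comp (MvPolynomial.linearIndependent_X _ R) b.repr.injective

theorem hopfStiefelCond_card_add_of_module (p : ℕ) [Fact p.Prime] {M : Type u} [AddCommGroup M]
    [Module (ZMod p) M] [DecidableEq M] (A B : Finset M) :
    hopfStiefelCond p #A #B #(A + B) := by
  classical
  obtain ⟨ι, φ, hφ⟩ := Module.Free.exists_injective_linearMap_mvPolynomial (ZMod p) M
  simpa only [← Finset.image_add, Finset.card_image_of_injective _ hφ] using
    hopfStiefelCond_card_add p (A.image φ) (B.image φ)

section liftMultiset

variable {V G : Type*} [Fintype G]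

def liftMultiset (ν : G → ℕ) (A : Finset V) (m : V → ℕ) : Finset (V × G) :=
  {z ∈ A ×ˢ Finset.univ | ν z.2 < m z.1}

theorem card_liftMultiset (ν : G → ℕ) (A : Finset V) (m : V → ℕ) :
    #(liftMultiset ν A m) = ∑ a ∈ A, #{x | ν x < m a} := by
  simp only [liftMultiset, Finset.card_filter, Finset.sum_product]

theorem liftMultiset_add_subset [Add V] [Add G] [DecidableEq V] [DecidableEq G] {ν : G → ℕ}
    (hν : ∀ x y, ν (x + y) ≤ ν x + ν y) {A B : Finset V}
    {m₁ m₂ m₃ : V → ℕ} (hm : ∀ a ∈ A, ∀ b ∈ B, m₁ a + m₂ b - 1 ≤ m₃ (a + b)) :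
    liftMultiset ν A m₁ + liftMultiset ν B m₂ ⊆ liftMultiset ν (A + B) m₃ := by
  intro z hz
  obtain ⟨⟨a, x⟩, hax, ⟨b, y⟩, hby, rfl⟩ := Finset.mem_add.mp hz
  simp only [liftMultiset, Finset.mem_filter, Finset.mem_product, Finset.mem_univ,
    and_true] at hax hby ⊢
  have := hν x y
  have := hm a hax.1 b hby.1
  exact ⟨Finset.add_mem_add hax.1 hby.1, by simp only [Prod.fst_add, Prod.snd_add]; omega⟩

end liftMultiset

theorem ZMod.val_finEquiv_symm (p : ℕ) [NeZero p] (x : ZMod p) :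
    ((ZMod.finEquiv p).symm x : ℕ) = x.val := by
  obtain _ | p := p
  · exact absurd rfl (NeZero.ne 0)
  · rfl

def digitEquiv (p t : ℕ) [NeZero p] : (Fin t → ZMod p) ≃ Fin (p ^ t) :=
  (Equiv.piCongrRight fun _ => (ZMod.finEquiv p).symm.toEquiv).trans finFunctionFinEquiv

namespace digitEquiv

variable {p t : ℕ} [NeZero p]

theorem val_apply (x : Fin t → ZMod p) :
    (digitEquiv p t x : ℕ) = ∑ i, (x i).val * p ^ (i : ℕ) := by
  simp [digitEquiv, ZMod.val_finEquiv_symm]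

theorem val_add_le (x y : Fin t → ZMod p) :
    (digitEquiv p t (x + y) : ℕ) ≤ digitEquiv p t x + digitEquiv p t y := by
  simp only [val_apply, ← Finset.sum_add_distrib, ← add_mul]
  exact Finset.sum_le_sum fun i _ => Nat.mul_le_mul_right _ (ZMod.val_add_le _ _)

theorem card_filter_val_lt (m : ℕ) :
    #{x : Fin t → ZMod p | (digitEquiv p t x : ℕ) < m} = min (p ^ t) m := by
  rw [← Fin.card_filter_val_lt]
  exact Finset.card_equiv (digitEquiv p t) (by simp)

theorem card_liftMultiset_le {V : Type*} (A : Finset V) (m : V → ℕ) :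
    #(liftMultiset (fun x => (digitEquiv p t x : ℕ)) A m) ≤ ∑ a ∈ A, m a := by
  rw [card_liftMultiset]
  exact Finset.sum_le_sum fun a _ => by rw [card_filter_val_lt]; exact min_le_right _ _

theorem card_liftMultiset_of_sum_le {V : Type*} {A : Finset V} {m : V → ℕ}
    (h : ∑ a ∈ A, m a ≤ p ^ t) :
    #(liftMultiset (fun x => (digitEquiv p t x : ℕ)) A m) = ∑ a ∈ A, m a := by
  rw [card_liftMultiset]
  refine Finset.sum_congr rfl fun a ha => ?_
  rw [card_filter_val_lt, min_eq_right ((Finset.single_le_sum (by simp) ha).trans h)]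

end digitEquiv

theorem stmt_19_general (p : ℕ) (hp : p.Prime)
    (V : Type*) [AddCommGroup V] [Module (ZMod p) V] [DecidableEq V]
    (A B : Finset V)
    (m₁ m₂ : V → ℕ)
    (r s : ℕ) (hr : r = ∑ a ∈ A, m₁ a) (hs : s = ∑ b ∈ B, m₂ b)
    (m₃ : V → ℕ)
    (hm₃ : ∀ c ∈ A + B, m₃ c =
      ((A ×ˢ B).filter fun ab => ab.1 + ab.2 = c).sup fun ab => m₁ ab.1 + m₂ ab.2 - 1) :
    betaHS p r s ≤ ∑ c ∈ A + B, m₃ c := by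
  have := Fact.mk hp
  set t := r + s
  set ν := fun x : Fin t → ZMod p => (digitEquiv p t x : ℕ)
  have hpt : t < p ^ t := Nat.lt_pow_self hp.one_lt
  have hA : #(liftMultiset ν A m₁) = r :=
    hr ▸ digitEquiv.card_liftMultiset_of_sum_le (hr ▸ (Nat.le_add_right r s).trans hpt.le)
  have hB : #(liftMultiset ν B m₂) = s :=
    hs ▸ digitEquiv.card_liftMultiset_of_sum_le (hs ▸ (Nat.le_add_left s r).trans hpt.le)
  have hsub : liftMultiset ν A m₁ + liftMultiset ν B m₂ ⊆ liftMultiset ν (A + B) m₃ :=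
    liftMultiset_add_subset digitEquiv.val_add_le fun a ha b hb => by
      rw [hm₃ _ (Finset.add_mem_add ha hb)]
      exact Finset.le_sup (f := fun ab : V × V => m₁ ab.1 + m₂ ab.2 - 1) (b := (a, b))
        (Finset.mem_filter.2 ⟨Finset.mem_product.2 ⟨ha, hb⟩, rfl⟩)
  calc betaHS p r s ≤ #(liftMultiset ν A m₁ + liftMultiset ν B m₂) :=
        Nat.sInf_le (hA ▸ hB ▸ hopfStiefelCond_card_add_of_module p _ _)
    _ ≤ #(liftMultiset ν (A + B) m₃) := Finset.card_le_card hsub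
    _ ≤ ∑ c ∈ A + B, m₃ c := digitEquiv.card_liftMultiset_le _ _

/-- The Eliahou–Kervaire theorem for multisets: for multisets `(A, m₁)` and `(B, m₂)` in
a vector space `V` over the prime field `F_p = ℤ/pℤ`, with `d(A) = r`, `d(B) = s`, and
sumset multiset `(A + B, m₃)` given by
`m₃(c) = max{m₁(a) + m₂(b) - 1 : a ∈ A, b ∈ B, a + b = c}`, we have
`d(A + B) ≥ β_p(r, s)`. -/
theorem stmt_19 (p : ℕ) (hp : p.Prime)
    (V : Type*) [AddCommGroup V] [Module (ZMod p) V] [DecidableEq V]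
    (A B : Finset V) (hA : A.Nonempty) (hB : B.Nonempty)
    (m₁ m₂ : V → ℕ) (hm₁ : ∀ a ∈ A, 1 ≤ m₁ a) (hm₂ : ∀ b ∈ B, 1 ≤ m₂ b)
    (r s : ℕ) (hr : r = ∑ a ∈ A, m₁ a) (hs : s = ∑ b ∈ B, m₂ b)
    (m₃ : V → ℕ)
    (hm₃ : ∀ c ∈ A + B, m₃ c =
      ((A ×ˢ B).filter fun ab => ab.1 + ab.2 = c).sup fun ab => m₁ ab.1 + m₂ ab.2 - 1) :
    betaHS p r s ≤ ∑ c ∈ A + B, m₃ c :=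
  stmt_19_general p hp V A B m₁ m₂ r s hr hs m₃ hm₃
end
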